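/- arXiv:1605.05490 — 12 statements merged into one kernel-verified Lean document; each statement's English description precedes it below -/
import Mathlib

section
/- A permutation π of {1,...,n} is decomposable (i.e., some proper nonempty prefix of π is a permutation of {1,...,i} for some i < n) and avoids the pattern 123 if and only if there exists i with 1 ≤ i ≤ n-1 such that π = i (i-1) ⋯ 1 n (n-1) ⋯ (i+1), i.e., π consists of the decreasing sequence from i down to 1 followed by the decreasing sequence from n down to i+1. -/
/-!
If `π` maps the block `[0, i)` onto itself, then `π` also maps `[i, n)` onto itself, and every
entry of the second block exceeds every entry of the first. An ascent inside the first block,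
followed by the first entry of the second block, would be a `123`; likewise the first entry
followed by an ascent inside the second block. So `π` is decreasing on both blocks, and a
decreasing map of a block of consecutive integers onto another one is the reversal.
-/

def Avoids123 {α β : Type*} [Preorder α] [Preorder β] (f : α → β) : Prop :=
  ¬ ∃ a b c, a < b ∧ b < c ∧ f a < f b ∧ f b < f c

section Avoids123

variable {α β : Type*} [Preorder α] [LinearOrder β] {f : α → β} {s : Set α}

theorem Avoids123.strictAntiOn_of_forall_lt (hf : f.Injective) (havoid : Avoids123 f) {c : α}
    (hc : ∀ b ∈ s, b < c ∧ f b < f c) : StrictAntiOn f s := by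
  intro a ha b hb hab
  have hne : f b ≠ f a := fun h => hab.ne (hf h).symm
  refine (le_of_not_gt fun hlt => ?_).lt_of_ne hne
  exact havoid ⟨a, b, c, hab, (hc b hb).1, hlt, (hc b hb).2⟩

theorem Avoids123.strictAntiOn_of_forall_gt (hf : f.Injective) (havoid : Avoids123 f) {c : α}
    (hc : ∀ a ∈ s, c < a ∧ f c < f a) : StrictAntiOn f s := by
  intro a ha b hb hab
  have hne : f b ≠ f a := fun h => hab.ne (hf h).symm
  refine (le_of_not_gt fun hlt => ?_).lt_of_ne hne
  exact havoid ⟨c, a, b, (hc a ha).1, hab, (hc a ha).2, hlt⟩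

end Avoids123

section StrictAntiOn

variable {n : ℕ} {f : Fin n → ℕ} {s : Set (Fin n)}

theorem StrictAntiOn.apply_add_sub_le (hs : s.OrdConnected) (hf : StrictAntiOn f s) {a b : Fin n}
    (ha : a ∈ s) (hb : b ∈ s) (hab : a ≤ b) : f b + (b - a : ℕ) ≤ f a := by
  suffices ∀ d : ℕ, ∀ b ∈ s, (b : ℕ) = a + d → f b + d ≤ f a by
    exact this _ b hb (by rw [Fin.le_def] at hab; omega)
  intro d
  induction d with
  | zero => intro b _ hb; simp [Fin.ext hb]
  | succ d ih =>
    intro b hb hba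
    let c : Fin n := ⟨a + d, by omega⟩
    have hcb : c < b := Fin.lt_def.2 (by simp [c]; omega)
    have hc : c ∈ s := hs.out ha hb ⟨Fin.le_def.2 (by simp [c]), hcb.le⟩
    have := hf hc hb hcb
    have := ih c hc rfl
    omega

theorem StrictAntiOn.eq_sub_of_le (hs : s.OrdConnected) (hf : StrictAntiOn f s)
    {a₀ a₁ a : Fin n} (ha₀ : a₀ ∈ s) (ha₁ : a₁ ∈ s) {M : ℕ} (hM₀ : f a₀ ≤ M)
    (hM₁ : M - (a₁ - a₀ : ℕ) ≤ f a₁) (ha : a ∈ s) (h₀ : a₀ ≤ a) (h₁ : a ≤ a₁) :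
    f a = M - (a - a₀ : ℕ) := by
  have := hf.apply_add_sub_le hs ha₀ ha h₀
  have := hf.apply_add_sub_le hs ha ha₁ h₁
  rw [Fin.le_def] at h₀ h₁
  omega

end StrictAntiOn

section Blocks

variable {n i : ℕ} {π : Equiv.Perm (Fin n)}

theorem le_val_of_block (hblock : ∀ a : Fin n, a.val < i ↔ (π a).val < i) {b : Fin n}
    (hb : i ≤ b.val) : i ≤ (π b).val :=
  not_lt.1 ((hblock b).not.1 (not_lt.2 hb))

theorem Avoids123.val_eq_of_lt_of_block (havoid : Avoids123 π) (hin : i < n)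
    (hblock : ∀ a : Fin n, a.val < i ↔ (π a).val < i) {a : Fin n} (ha : a.val < i) :
    (π a).val = i - 1 - a.val := by
  let mid : Fin n := ⟨i, hin⟩
  have hanti : StrictAntiOn π (Set.Iio mid) :=
    havoid.strictAntiOn_of_forall_lt π.injective fun b hb =>
      ⟨hb, Fin.lt_def.2 (((hblock b).1 hb).trans_le (le_val_of_block hblock le_rfl))⟩
  have := hanti.eq_sub_of_le (f := fun a => (π a : ℕ)) Set.ordConnected_Iio
    (a₀ := ⟨0, by omega⟩) (a₁ := ⟨i - 1, by omega⟩) (M := i - 1)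
    (Fin.lt_def.2 (by simp [mid]; omega)) (Fin.lt_def.2 (by simp [mid]; omega))
    (by have := (hblock ⟨0, by omega⟩).1 (by simp; omega); omega) (by simp)
    ha (Fin.le_def.2 (Nat.zero_le _)) (Fin.le_def.2 (by simp; omega))
  simpa using this

theorem Avoids123.val_eq_of_le_of_block (havoid : Avoids123 π) (hin : i < n)
    (hblock : ∀ a : Fin n, a.val < i ↔ (π a).val < i) (hi0 : 0 < i) {a : Fin n}
    (ha : i ≤ a.val) : (π a).val = n - 1 - (a.val - i) := by
  let first : Fin n := ⟨0, by omega⟩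
  let mid : Fin n := ⟨i, hin⟩
  let last : Fin n := ⟨n - 1, by omega⟩
  have hanti : StrictAntiOn π (Set.Ici mid) :=
    havoid.strictAntiOn_of_forall_gt π.injective fun b hb =>
      ⟨(show first < mid from Fin.lt_def.2 hi0).trans_le hb,
        Fin.lt_def.2 (((hblock first).1 hi0).trans_le (le_val_of_block hblock hb))⟩
  have hlast := le_val_of_block hblock (b := last) (by simp [last]; omega)
  exact hanti.eq_sub_of_le (f := fun a => (π a : ℕ)) Set.ordConnected_Ici
    (a₀ := mid) (a₁ := last) (M := n - 1) Set.self_mem_Ici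
    (Fin.le_def.2 (by simp [last, mid]; omega)) (by have := (π mid).isLt; omega)
    (by rw [show (last : ℕ) = n - 1 from rfl, show (mid : ℕ) = i from rfl]; omega)
    ha ha (Fin.le_def.2 (by simp [last]; omega))

end Blocks

theorem avoids123_of_blockReversal {n i : ℕ} {π : Equiv.Perm (Fin n)}
    (h₁ : ∀ a : Fin n, a.val < i → (π a).val = i - 1 - a.val)
    (h₂ : ∀ a : Fin n, i ≤ a.val → (π a).val = n - 1 - (a.val - i)) : Avoids123 π := by
  rintro ⟨a, b, c, hab, hbc, hπab, hπbc⟩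
  rw [Fin.lt_def] at hab hbc hπab hπbc
  have := c.isLt
  by_cases hbi : b.val < i
  · have := h₁ a (by omega)
    have := h₁ b hbi
    omega
  · have := h₂ b (by omega)
    have := h₂ c (by omega)
    omega

/-- A permutation of {1,...,n} is decomposable and avoids 123 iff
it equals i(i-1)⋯1 n(n-1)⋯(i+1) for some 1 ≤ i ≤ n-1 (here 0-indexed). -/
theorem stmt0 (n : ℕ) (π : Equiv.Perm (Fin n)) :
    ((∃ i : ℕ, 0 < i ∧ i < n ∧ ∀ a : Fin n, a.val < i ↔ (π a).val < i) ∧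
      ¬ ∃ a b c : Fin n, a < b ∧ b < c ∧ π a < π b ∧ π b < π c) ↔
    ∃ i : ℕ, 1 ≤ i ∧ i ≤ n - 1 ∧
      (∀ a : Fin n, a.val < i → (π a).val = i - 1 - a.val) ∧
      (∀ a : Fin n, i ≤ a.val → (π a).val = n - 1 - (a.val - i)) := by
  constructor
  · rintro ⟨⟨i, hi0, hin, hblock⟩, havoid⟩
    replace havoid : Avoids123 π := havoid
    exact ⟨i, hi0, by omega, fun a => havoid.val_eq_of_lt_of_block hin hblock,
      fun a => havoid.val_eq_of_le_of_block hin hblock hi0⟩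
  · rintro ⟨i, hi1, hin1, h₁, h₂⟩
    refine ⟨⟨i, hi1, by omega, fun a => ⟨fun ha => ?_, fun ha => ?_⟩⟩,
      avoids123_of_blockReversal h₁ h₂⟩
    · have := h₁ a ha
      omega
    · by_contra hai
      have := h₂ a (by omega)
      have := a.isLt
      omega
end

section
/- For every n ≥ 1, the number of indecomposable permutations of {1,...,n} that avoid the pattern 123 equals C_n − (n − 1), where C_n is the n-th Catalan number. -/
/-!
Reversal `π ↦ π ∘ rev` turns 123-avoiders into 321-avoiders. A permutation avoids 321 iff it is
increasing both on its excedances `{i | i < ρ i}` and on their complement, so it is determined by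
its excedance positions `I` and excedance values `V`, and the pairs that occur are exactly those
with `#I = #V` and `#{v ∈ V | v ≤ t} ≤ #{i ∈ I | i < t}` for all `t`. Writing, for each `t`, a
`D` if `t ∈ V` (else `U`) followed by a `U` if `t ∈ I` (else `D`) turns these pairs into the Dyck
words of semilength `n`, so there are `C_n` 123-avoiders.

A 123-avoider that maps the block `[0, c]` to itself must be decreasing on it and on its
complement, so it is `x ↦ c - x` computed modulo `n`. The `n - 1` choices `c < n - 1` give all
decomposable 123-avoiders.
-/

open Finset DyckStep

theorem StrictMonoOn.eqOn_of_image_eq {α β : Type*} [LinearOrder α] [Preorder β]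
    {f g : α → β} {s : Set α} (hs : s.Finite) (hf : StrictMonoOn f s) (hg : StrictMonoOn g s)
    (h : f '' s = g '' s) : s.EqOn f g := by
  have : Finite s := hs
  have hrefl : (hf.orderIso f s).trans ((OrderIso.setCongr _ _ h).trans (hg.orderIso g s).symm) =
      OrderIso.refl s := Subsingleton.elim _ _
  intro x hx
  have := congrArg (fun y => ((hg.orderIso g s) y : β)) (DFunLike.congr_fun hrefl ⟨x, hx⟩)
  simp only [OrderIso.trans_apply, OrderIso.apply_symm_apply, OrderIso.refl_apply] at this
  exact this

theorem Equiv.eq_of_strictMonoOn_of_strictMonoOn_compl {α β : Type*} [LinearOrder α]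
    [Finite α] [LinearOrder β] {f g : α ≃ β} {s : Set α} (hf : StrictMonoOn f s)
    (hfc : StrictMonoOn f sᶜ) (hg : StrictMonoOn g s) (hgc : StrictMonoOn g sᶜ)
    (h : f '' s = g '' s) : f = g := by
  have hc : f '' sᶜ = g '' sᶜ := by rw [f.image_compl, g.image_compl, h]
  ext x
  by_cases hx : x ∈ s
  · exact hf.eqOn_of_image_eq s.toFinite hg h hx
  · exact hfc.eqOn_of_image_eq sᶜ.toFinite hgc hc hx

theorem Equiv.eq_of_strictAntiOn_of_strictAntiOn_compl {α β : Type*} [LinearOrder α]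
    [Finite α] [LinearOrder β] {f g : α ≃ β} {s : Set α} (hf : StrictAntiOn f s)
    (hfc : StrictAntiOn f sᶜ) (hg : StrictAntiOn g s) (hgc : StrictAntiOn g sᶜ)
    (h : f '' s = g '' s) : f = g := by
  have := Equiv.eq_of_strictMonoOn_of_strictMonoOn_compl (f := f.trans OrderDual.toDual)
    (g := g.trans OrderDual.toDual) hf.dual_right hfc.dual_right hg.dual_right hgc.dual_right
    (by simp only [coe_trans, Set.image_comp, h])
  ext x
  simpa using congrArg (fun e => OrderDual.ofDual (e x)) this

section Rank

variable {α : Type*} [LinearOrder α] [Fintype α] {p q : α → Prop} [DecidablePred p]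
  [DecidablePred q]

noncomputable def Fintype.orderIsoOfCardEq {β : Type*} [LinearOrder β] [Fintype β]
    (h : Fintype.card α = Fintype.card β) : α ≃o β :=
  (Fintype.orderIsoFinOfCardEq α h).symm.trans (Fintype.orderIsoFinOfCardEq β rfl)

theorem OrderIso.card_filter_le_apply (e : {x // p x} ≃o {x // q x}) (x : {x // p x}) :
    #{y | q y ∧ y ≤ e x} = #{y | p y ∧ y ≤ x} := by
  refine card_bij' (fun y hy => (e.symm ⟨y, (mem_filter.1 hy).2.1⟩ : α))
    (fun y hy => (e ⟨y, (mem_filter.1 hy).2.1⟩ : α)) (fun y hy => ?_) (fun y hy => ?_)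
    (fun _ _ => by simp) (fun _ _ => by simp)
  · have hy := (mem_filter.1 hy).2
    refine mem_filter.2 ⟨mem_univ _, (e.symm _).2, ?_⟩
    simpa using e.symm.monotone (show (⟨y, hy.1⟩ : {x // q x}) ≤ e x from hy.2)
  · have hy := (mem_filter.1 hy).2
    exact mem_filter.2 ⟨mem_univ _, (e _).2, e.monotone (Subtype.mk_le_mk.2 hy.2)⟩

end Rank

section SubtypeCongr

variable {α : Type*} {p q : α → Prop} [DecidablePred p] [DecidablePred q]

theorem Equiv.subtypeCongr_apply_of_pos (e : {x // p x} ≃ {x // q x})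
    (f : {x // ¬ p x} ≃ {x // ¬ q x}) {x : α} (hx : p x) : e.subtypeCongr f x = e ⟨x, hx⟩ := by
  simp [Equiv.subtypeCongr, Equiv.sumCompl_symm_apply_of_pos hx]

theorem Equiv.subtypeCongr_apply_of_neg (e : {x // p x} ≃ {x // q x})
    (f : {x // ¬ p x} ≃ {x // ¬ q x}) {x : α} (hx : ¬ p x) : e.subtypeCongr f x = f ⟨x, hx⟩ := by
  simp [Equiv.subtypeCongr, Equiv.sumCompl_symm_apply_of_neg hx]

theorem Equiv.image_subtypeCongr (e : {x // p x} ≃ {x // q x})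
    (f : {x // ¬ p x} ≃ {x // ¬ q x}) :
    e.subtypeCongr f '' {x | p x} = {x | q x} := by
  ext y
  refine ⟨?_, fun hy => ⟨e.symm ⟨y, hy⟩, (e.symm _).2, ?_⟩⟩
  · rintro ⟨x, hx, rfl⟩
    rw [Equiv.subtypeCongr_apply_of_pos e f hx]
    exact (e _).2
  · rw [Equiv.subtypeCongr_apply_of_pos e f (e.symm _).2]
    simp

theorem OrderIso.strictMonoOn_subtypeCongr [LinearOrder α] (e : {x // p x} ≃o {x // q x})
    (f : {x // ¬ p x} ≃o {x // ¬ q x}) :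
    StrictMonoOn (e.toEquiv.subtypeCongr f.toEquiv) {x | p x} ∧
      StrictMonoOn (e.toEquiv.subtypeCongr f.toEquiv) {x | p x}ᶜ := by
  refine ⟨fun a ha b hb hab => ?_, fun a ha b hb hab => ?_⟩
  · rw [Equiv.subtypeCongr_apply_of_pos _ _ ha, Equiv.subtypeCongr_apply_of_pos _ _ hb]
    exact e.strictMono (Subtype.mk_lt_mk.2 hab)
  · rw [Equiv.subtypeCongr_apply_of_neg _ _ ha, Equiv.subtypeCongr_apply_of_neg _ _ hb]
    exact f.strictMono (Subtype.mk_lt_mk.2 hab)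

end SubtypeCongr

def IsBallotPair {n : ℕ} (I V : Finset (Fin n)) : Prop :=
  #I = #V ∧ ∀ t, #{v | v ∈ V ∧ v ≤ t} ≤ #{i | i ∈ I ∧ i < t}

theorem Fin.card_filter_mem_le_add_card_filter_not_mem_le {n : ℕ} (s : Finset (Fin n))
    (x : Fin n) : #{y | y ∈ s ∧ y ≤ x} + #{y | y ∉ s ∧ y ≤ x} = x + 1 := by
  rw [← card_union_of_disjoint (disjoint_filter.2 fun _ _ h h' => h'.1 h.1), ← filter_or,
    ← Fin.card_Iic x]
  congr 1
  ext y
  simp only [mem_filter, mem_univ, true_and, mem_Iic]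
  tauto

section Ballot

variable {n : ℕ} {I V : Finset (Fin n)}

theorem lt_orderIso_apply_of_ballot (hb : ∀ t, #{v | v ∈ V ∧ v ≤ t} ≤ #{i | i ∈ I ∧ i < t})
    (e : {x // x ∈ I} ≃o {x // x ∈ V}) (x : {x // x ∈ I}) : (x : Fin n) < e x := by
  by_contra! hle
  have hrank := e.card_filter_le_apply x
  have hmono : #{y | y ∈ V ∧ y ≤ (e x : Fin n)} ≤ #{y | y ∈ V ∧ y ≤ (x : Fin n)} :=
    card_le_card fun y hy => by
      simp only [mem_filter, mem_univ, true_and] at hy ⊢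
      exact ⟨hy.1, hy.2.trans hle⟩
  have hlt : #{y | y ∈ I ∧ y < (x : Fin n)} < #{y | y ∈ I ∧ y ≤ (x : Fin n)} := by
    refine card_lt_card ((ssubset_iff_of_subset fun y hy => ?_).2 ⟨x, ?_, ?_⟩) <;>
      simp_all [le_of_lt]
  have := hb x
  omega

theorem orderIso_apply_le_of_ballot (hb : ∀ t, #{v | v ∈ V ∧ v ≤ t} ≤ #{i | i ∈ I ∧ i < t})
    (f : {x // x ∉ I} ≃o {x // x ∉ V}) (x : {x // x ∉ I}) : (f x : Fin n) ≤ x := by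
  by_contra! hlt
  have hrank := f.card_filter_le_apply x
  have hgrow : #{y | y ∉ V ∧ y ≤ (x : Fin n)} < #{y | y ∉ V ∧ y ≤ (f x : Fin n)} := by
    refine card_lt_card ((ssubset_iff_of_subset fun y hy => ?_).2 ⟨f x, ?_, ?_⟩)
    · simp only [mem_filter, mem_univ, true_and] at hy ⊢
      exact ⟨hy.1, hy.2.trans hlt.le⟩
    · simpa using (f x).2
    · simp [hlt]
  have hx : #{y | y ∈ I ∧ y < (x : Fin n)} = #{y | y ∈ I ∧ y ≤ (x : Fin n)} := by
    congr 1
    exact filter_congr fun y _ => and_congr_right fun hy =>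
      (lt_iff_le_and_ne.trans (and_iff_left (ne_of_mem_of_not_mem hy x.2)))
  have hI := Fin.card_filter_mem_le_add_card_filter_not_mem_le I x
  have hV := Fin.card_filter_mem_le_add_card_filter_not_mem_le V x
  have := hb x
  omega

end Ballot

namespace Equiv.Perm

variable {n : ℕ}

def Avoids123 (π : Perm (Fin n)) : Prop :=
  ¬ ∃ a b c : Fin n, a < b ∧ b < c ∧ π a < π b ∧ π b < π c

def Avoids321 (π : Perm (Fin n)) : Prop :=
  ¬ ∃ a b c : Fin n, a < b ∧ b < c ∧ π b < π a ∧ π c < π b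

def IsDecomposable (π : Perm (Fin n)) : Prop :=
  ∃ i : ℕ, 0 < i ∧ i < n ∧ ∀ a : Fin n, a.val < i ↔ (π a).val < i

theorem avoids123_iff_avoids321_mul_revPerm (π : Perm (Fin n)) :
    π.Avoids123 ↔ (π * Fin.revPerm).Avoids321 := by
  refine not_congr ⟨fun ⟨a, b, c, hab, hbc, h₁, h₂⟩ => ?_,
    fun ⟨a, b, c, hab, hbc, h₁, h₂⟩ => ?_⟩
  · exact ⟨c.rev, b.rev, a.rev, Fin.rev_lt_rev.2 hbc, Fin.rev_lt_rev.2 hab, by simpa, by simpa⟩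
  · exact ⟨c.rev, b.rev, a.rev, Fin.rev_lt_rev.2 hbc, Fin.rev_lt_rev.2 hab, by simpa using h₂,
      by simpa using h₁⟩

theorem exists_lt_apply_lt_of_lt_apply (ρ : Perm (Fin n)) {b : Fin n} (hb : b < ρ b) :
    ∃ c, b < c ∧ ρ c < ρ b := by
  by_contra! h
  have hcard : #(Ioi b) ≤ #(Ioi (ρ b)) := by
    refine card_le_card_of_injOn ρ (fun c hc => ?_) ρ.injective.injOn
    have hbc : b < c := by simpa using hc
    simpa using (h c hbc).lt_of_ne (ρ.injective.ne hbc.ne)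
  simp only [Fin.card_Ioi] at hcard
  have := (ρ b).isLt
  omega

theorem exists_lt_apply_lt_of_apply_le (ρ : Perm (Fin n)) {a b : Fin n} (hab : a < b)
    (hba : ρ b < ρ a) (ha : ρ a ≤ a) : ∃ c, c < a ∧ ρ a < ρ c := by
  by_contra! h
  have hcard : #(insert b (Iio a)) ≤ #(Iio (ρ a)) := by
    refine card_le_card_of_injOn ρ (fun c hc => ?_) ρ.injective.injOn
    obtain rfl | hc := mem_insert.1 hc
    · simpa using hba
    · have hca : c < a := by simpa using hc
      simpa using (h c hca).lt_of_ne (ρ.injective.ne hca.ne)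
  rw [card_insert_of_notMem (by simpa using hab.le), Fin.card_Iio, Fin.card_Iio] at hcard
  exact absurd ha (by rw [Fin.le_def]; omega)

theorem avoids321_iff_strictMonoOn (ρ : Perm (Fin n)) :
    ρ.Avoids321 ↔ StrictMonoOn ρ {i | i < ρ i} ∧ StrictMonoOn ρ {i | i < ρ i}ᶜ := by
  refine ⟨fun h => ⟨fun a ha b hb hab => ?_, fun a ha b hb hab => ?_⟩, ?_⟩
  · by_contra hle
    obtain ⟨c, hbc, hc⟩ := ρ.exists_lt_apply_lt_of_lt_apply hb
    exact h ⟨a, b, c, hab, hbc, (not_lt.1 hle).lt_of_ne (ρ.injective.ne hab.ne'), hc⟩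
  · by_contra hle
    have hba := (not_lt.1 hle).lt_of_ne (ρ.injective.ne hab.ne')
    obtain ⟨c, hca, hc⟩ := ρ.exists_lt_apply_lt_of_apply_le hab hba (not_lt.1 ha)
    exact h ⟨c, a, b, hca, hab, hc, hba⟩
  · rintro ⟨hE, hEc⟩ ⟨a, b, c, hab, hbc, hba, hcb⟩
    have hac := hab.trans hbc
    by_cases hb : b < ρ b
    · have ha : ¬ a < ρ a := fun ha => (hE ha hb hab).not_gt hba
      have hc : ¬ c < ρ c := fun hc => (hE hb hc hbc).not_gt hcb
      exact (hEc ha hc hac).not_gt (hcb.trans hba)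
    · have ha : a < ρ a := by_contra fun ha => (hEc ha hb hab).not_gt hba
      have hc : c < ρ c := by_contra fun hc => (hEc hb hc hbc).not_gt hcb
      exact (hE ha hc hac).not_gt (hcb.trans hba)

def excedances (ρ : Perm (Fin n)) : Finset (Fin n) := {i | i < ρ i}

theorem isBallotPair_excedances (ρ : Perm (Fin n)) :
    IsBallotPair ρ.excedances (ρ.excedances.image ρ) := by
  refine ⟨(card_image_of_injective _ ρ.injective).symm, fun t => ?_⟩
  calc #{v | v ∈ ρ.excedances.image ρ ∧ v ≤ t}
      ≤ #(({i | i ∈ ρ.excedances ∧ i < t} : Finset (Fin n)).image ρ) := by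
        refine card_le_card fun v hv => ?_
        simp only [excedances, mem_filter, mem_univ, true_and, mem_image] at hv ⊢
        obtain ⟨⟨i, hi, rfl⟩, hit⟩ := hv
        exact ⟨i, ⟨hi, hi.trans_le hit⟩, rfl⟩
    _ ≤ _ := card_image_le

noncomputable def ofBallotPair (I V : Finset (Fin n)) (h : #I = #V) : Perm (Fin n) :=
  Equiv.subtypeCongr
    (Fintype.orderIsoOfCardEq (α := {x // x ∈ I}) (β := {x // x ∈ V}) (by simpa using h)).toEquiv
    (Fintype.orderIsoOfCardEq (α := {x // x ∉ I}) (β := {x // x ∉ V})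
      (by simp [Fintype.card_subtype_compl, h])).toEquiv

theorem excedances_ofBallotPair {I V : Finset (Fin n)} (hIV : IsBallotPair I V) :
    (ofBallotPair I V hIV.1).excedances = I := by
  ext x
  simp only [excedances, mem_filter, mem_univ, true_and]
  by_cases hx : x ∈ I
  · rw [ofBallotPair, Equiv.subtypeCongr_apply_of_pos _ _ hx, OrderIso.coe_toEquiv]
    exact iff_of_true (lt_orderIso_apply_of_ballot hIV.2 _ ⟨x, hx⟩) hx
  · rw [ofBallotPair, Equiv.subtypeCongr_apply_of_neg _ _ hx, OrderIso.coe_toEquiv]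
    exact iff_of_false (not_lt.2 (orderIso_apply_le_of_ballot hIV.2 _ ⟨x, hx⟩)) hx

theorem strictMonoOn_ofBallotPair {I V : Finset (Fin n)} (h : #I = #V) :
    StrictMonoOn (ofBallotPair I V h) I ∧
      StrictMonoOn (ofBallotPair I V h) (I : Set (Fin n))ᶜ :=
  OrderIso.strictMonoOn_subtypeCongr _ _

theorem image_ofBallotPair {I V : Finset (Fin n)} (h : #I = #V) :
    I.image (ofBallotPair I V h) = V := by
  rw [← coe_inj, coe_image]
  exact Equiv.image_subtypeCongr _ _

theorem avoids321_ofBallotPair {I V : Finset (Fin n)} (hIV : IsBallotPair I V) :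
    (ofBallotPair I V hIV.1).Avoids321 := by
  have h : {i | i < ofBallotPair I V hIV.1 i} = I := by
    simpa [excedances, Set.ext_iff, Finset.ext_iff] using excedances_ofBallotPair hIV
  rw [avoids321_iff_strictMonoOn, h]
  exact strictMonoOn_ofBallotPair hIV.1

theorem ofBallotPair_excedances {ρ : Perm (Fin n)} (hρ : ρ.Avoids321) :
    ofBallotPair ρ.excedances (ρ.excedances.image ρ) (isBallotPair_excedances ρ).1 = ρ := by
  have hE : (ρ.excedances : Set (Fin n)) = {i | i < ρ i} := by ext; simp [excedances]
  have hσ := strictMonoOn_ofBallotPair (isBallotPair_excedances ρ).1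
  have hρ' := (avoids321_iff_strictMonoOn ρ).1 hρ
  rw [hE] at hσ
  refine Equiv.eq_of_strictMonoOn_of_strictMonoOn_compl hσ.1 hσ.2 hρ'.1 hρ'.2 ?_
  rw [← hE, ← coe_image, ← coe_image, image_ofBallotPair]

noncomputable def avoids321EquivBallotPair :
    {ρ : Perm (Fin n) // ρ.Avoids321} ≃
      {q : Finset (Fin n) × Finset (Fin n) // IsBallotPair q.1 q.2} where
  toFun ρ := ⟨(ρ.1.excedances, ρ.1.excedances.image ρ.1), isBallotPair_excedances ρ.1⟩
  invFun q := ⟨ofBallotPair q.1.1 q.1.2 q.2.1, avoids321_ofBallotPair q.2⟩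
  left_inv ρ := Subtype.ext (ofBallotPair_excedances ρ.2)
  right_inv q := Subtype.ext <| Prod.ext (excedances_ofBallotPair q.2) <| by
    simp only [excedances_ofBallotPair q.2, image_ofBallotPair]

end Equiv.Perm

def ballotWord (A B : Finset ℕ) : ℕ → List DyckStep
  | 0 => []
  | k + 1 => ballotWord A B k ++ [if k ∈ B then D else U, if k ∈ A then U else D]

section BallotWord

variable (A B : Finset ℕ)

theorem length_ballotWord (k : ℕ) : (ballotWord A B k).length = 2 * k := by
  induction k with
  | zero => rfl
  | succ k ih => simp [ballotWord, ih]; ring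

theorem take_two_mul_ballotWord {k m : ℕ} (h : k ≤ m) :
    (ballotWord A B m).take (2 * k) = ballotWord A B k := by
  induction m with
  | zero => rw [Nat.le_zero.1 h]; rfl
  | succ m ih =>
    obtain h | rfl := h.lt_or_eq
    · rw [ballotWord, List.take_append_of_le_length (by simp [length_ballotWord]; omega),
        ih (by omega)]
    · exact List.take_of_length_le (by simp [length_ballotWord])

theorem take_two_mul_add_one_ballotWord {k m : ℕ} (h : k < m) :
    (ballotWord A B m).take (2 * k + 1) = ballotWord A B k ++ [if k ∈ B then D else U] := by
  have h' : (ballotWord A B m).take (2 * k + 1) =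
      ((ballotWord A B m).take (2 * (k + 1))).take (2 * k + 1) := by
    rw [List.take_take]
    congr 1
    omega
  rw [h', take_two_mul_ballotWord A B h, ballotWord, List.take_append,
    List.take_of_length_le (by simp [length_ballotWord])]
  simp [length_ballotWord, show 2 * k + 1 - 2 * k = 1 by omega]

theorem getElem?_two_mul_ballotWord {t m : ℕ} (h : t < m) :
    (ballotWord A B m)[2 * t]? = some (if t ∈ B then D else U) := by
  rw [← List.getElem?_take_of_lt (show 2 * t < 2 * t + 1 by omega),
    take_two_mul_add_one_ballotWord A B h, ← length_ballotWord A B t, List.getElem?_concat_length]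

theorem getElem?_two_mul_add_one_ballotWord {t m : ℕ} (h : t < m) :
    (ballotWord A B m)[2 * t + 1]? = some (if t ∈ A then U else D) := by
  rw [← List.getElem?_take_of_lt (show 2 * t + 1 < 2 * (t + 1) by omega),
    take_two_mul_ballotWord A B h, ballotWord,
    List.getElem?_append_right (by simp [length_ballotWord])]
  simp [length_ballotWord]

theorem Finset.card_filter_lt_add_one (k : ℕ) :
    #{a ∈ A | a < k + 1} = #{a ∈ A | a < k} + if k ∈ A then 1 else 0 := by
  have h : {a ∈ A | a < k + 1} = {a ∈ A | a < k} ∪ {a ∈ A | a = k} := by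
    ext a
    simp only [mem_filter, mem_union, ← and_or_left, Nat.lt_succ_iff_lt_or_eq]
  rw [h, card_union_of_disjoint (disjoint_filter.2 fun _ _ h h' => by omega), filter_eq']
  split_ifs <;> simp

theorem count_U_ballotWord (k : ℕ) :
    (ballotWord A B k).count U + #{b ∈ B | b < k} = k + #{a ∈ A | a < k} := by
  induction k with
  | zero => simp [ballotWord]
  | succ k ih =>
    rw [ballotWord, List.count_append, card_filter_lt_add_one, card_filter_lt_add_one]
    by_cases hA : k ∈ A <;> by_cases hB : k ∈ B <;> simp [hA, hB] <;> omega

theorem count_D_ballotWord (k : ℕ) :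
    (ballotWord A B k).count D + #{a ∈ A | a < k} = k + #{b ∈ B | b < k} := by
  induction k with
  | zero => simp [ballotWord]
  | succ k ih =>
    rw [ballotWord, List.count_append, card_filter_lt_add_one, card_filter_lt_add_one]
    by_cases hA : k ∈ A <;> by_cases hB : k ∈ B <;> simp [hA, hB] <;> omega

theorem count_D_le_count_U_take_ballotWord_iff (m : ℕ) :
    (∀ i, ((ballotWord A B m).take i).count D ≤ ((ballotWord A B m).take i).count U) ↔
      ∀ k < m, #{b ∈ B | b < k + 1} ≤ #{a ∈ A | a < k} := by
  have hU := count_U_ballotWord A B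
  have hD := count_D_ballotWord A B
  refine ⟨fun h k hk => ?_, fun h i => ?_⟩
  · have hpre := h (2 * k + 1)
    rw [take_two_mul_add_one_ballotWord A B hk, List.count_append, List.count_append] at hpre
    have := hU k
    have := hD k
    rw [card_filter_lt_add_one]
    by_cases hB : k ∈ B <;> simp [hB] at hpre ⊢ <;> omega
  have heven : ∀ k ≤ m, ((ballotWord A B m).take (2 * k)).count D ≤
      ((ballotWord A B m).take (2 * k)).count U := by
    rintro (_ | k) hk
    · simp
    · have := h k (by omega)
      have := hU (k + 1)
      have := hD (k + 1)
      have hA := card_filter_lt_add_one A k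
      rw [take_two_mul_ballotWord A B hk]
      split_ifs at hA <;> omega
  obtain hi | hi := le_or_gt (2 * m) i
  · rw [List.take_of_length_le (by rw [length_ballotWord]; omega)]
    simpa [take_two_mul_ballotWord] using heven m le_rfl
  obtain ⟨k, rfl | rfl⟩ : ∃ k, i = 2 * k ∨ i = 2 * k + 1 := ⟨i / 2, by omega⟩
  · exact heven k (by omega)
  · have hk := h k (by omega)
    have := hU k
    have := hD k
    rw [take_two_mul_add_one_ballotWord A B (by omega), List.count_append, List.count_append]
    rw [card_filter_lt_add_one] at hk
    by_cases hB : k ∈ B <;> simp [hB] at hk ⊢ <;> omega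

end BallotWord

section DyckWord

variable {n : ℕ}

theorem Finset.card_filter_map_valEmbedding_lt (I : Finset (Fin n)) (k : ℕ) :
    #{a ∈ I.map Fin.valEmbedding | a < k} = #{i | i ∈ I ∧ (i : ℕ) < k} := by
  rw [filter_map, card_map, ← filter_filter, filter_univ_mem]
  rfl

theorem isBallotPair_iff (I V : Finset (Fin n)) : IsBallotPair I V ↔
    #{a ∈ I.map Fin.valEmbedding | a < n} = #{b ∈ V.map Fin.valEmbedding | b < n} ∧
      ∀ k < n, #{b ∈ V.map Fin.valEmbedding | b < k + 1} ≤
        #{a ∈ I.map Fin.valEmbedding | a < k} := by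
  simp only [card_filter_map_valEmbedding_lt, Fin.is_lt, and_true, filter_univ_mem]
  refine and_congr_right fun _ => Fin.forall_iff.trans (forall₂_congr fun k hk => ?_)
  simp only [Fin.le_def, Fin.lt_def, Nat.lt_succ_iff]

def ballotPairToDyckWord (I V : Finset (Fin n)) (h : IsBallotPair I V) : DyckWord where
  toList := ballotWord (I.map Fin.valEmbedding) (V.map Fin.valEmbedding) n
  count_U_eq_count_D := by
    have := count_U_ballotWord (I.map Fin.valEmbedding) (V.map Fin.valEmbedding) n
    have := count_D_ballotWord (I.map Fin.valEmbedding) (V.map Fin.valEmbedding) n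
    have := ((isBallotPair_iff I V).1 h).1
    omega
  count_D_le_count_U :=
    (count_D_le_count_U_take_ballotWord_iff _ _ n).2 ((isBallotPair_iff I V).1 h).2

theorem semilength_ballotPairToDyckWord (I V : Finset (Fin n)) (h : IsBallotPair I V) :
    (ballotPairToDyckWord I V h).semilength = n := by
  have := count_U_ballotWord (I.map Fin.valEmbedding) (V.map Fin.valEmbedding) n
  have := ((isBallotPair_iff I V).1 h).1
  change (ballotWord _ _ n).count U = n
  omega

variable (n) in
def DyckWord.toBallotPair (p : DyckWord) : Finset (Fin n) × Finset (Fin n) :=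
  (({t | p.toList[2 * (t : ℕ) + 1]? = some U} : Finset (Fin n)),
    ({t | p.toList[2 * (t : ℕ)]? = some D} : Finset (Fin n)))

theorem DyckWord.ballotWord_toBallotPair {p : DyckWord} (hp : p.semilength = n) :
    ballotWord ((p.toBallotPair n).1.map Fin.valEmbedding)
      ((p.toBallotPair n).2.map Fin.valEmbedding) n = p.toList := by
  have hlen : p.toList.length = 2 * n := by rw [← p.two_mul_semilength_eq_length, hp]
  refine List.ext_getElem? fun i => ?_
  obtain hi | hi := le_or_gt (2 * n) i
  · rw [List.getElem?_eq_none (by rw [length_ballotWord]; omega),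
      List.getElem?_eq_none (by omega)]
  obtain ⟨t, ht, rfl | rfl⟩ : ∃ t < n, i = 2 * t ∨ i = 2 * t + 1 := ⟨i / 2, by omega, by omega⟩
  · rw [getElem?_two_mul_ballotWord _ _ ht]
    obtain ⟨s, hs⟩ : ∃ s, p.toList[2 * t]? = some s := ⟨_, List.getElem?_eq_getElem (by omega)⟩
    cases s <;> simp [DyckWord.toBallotPair, Fin.exists_iff, ht, hs]
  · rw [getElem?_two_mul_add_one_ballotWord _ _ ht]
    obtain ⟨s, hs⟩ : ∃ s, p.toList[2 * t + 1]? = some s :=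
      ⟨_, List.getElem?_eq_getElem (by omega)⟩
    cases s <;> simp [DyckWord.toBallotPair, Fin.exists_iff, ht, hs]

theorem DyckWord.isBallotPair_toBallotPair {p : DyckWord} (hp : p.semilength = n) :
    IsBallotPair (p.toBallotPair n).1 (p.toBallotPair n).2 := by
  have hw := DyckWord.ballotWord_toBallotPair hp
  rw [isBallotPair_iff]
  refine ⟨?_, (count_D_le_count_U_take_ballotWord_iff _ _ n).1 (hw ▸ p.count_D_le_count_U)⟩
  have := count_U_ballotWord ((p.toBallotPair n).1.map Fin.valEmbedding)
    ((p.toBallotPair n).2.map Fin.valEmbedding) n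
  have := count_D_ballotWord ((p.toBallotPair n).1.map Fin.valEmbedding)
    ((p.toBallotPair n).2.map Fin.valEmbedding) n
  have := p.count_U_eq_count_D
  rw [hw] at *
  omega

theorem toBallotPair_ballotPairToDyckWord {I V : Finset (Fin n)} (h : IsBallotPair I V) :
    (ballotPairToDyckWord I V h).toBallotPair n = (I, V) := by
  ext t
  · simp only [DyckWord.toBallotPair, mem_filter, mem_univ, true_and]
    change (ballotWord _ _ n)[2 * (t : ℕ) + 1]? = _ ↔ _
    simp [getElem?_two_mul_add_one_ballotWord _ _ t.isLt, Fin.val_inj]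
  · simp only [DyckWord.toBallotPair, mem_filter, mem_univ, true_and]
    change (ballotWord _ _ n)[2 * (t : ℕ)]? = _ ↔ _
    simp [getElem?_two_mul_ballotWord _ _ t.isLt, Fin.val_inj]

def ballotPairEquivDyckWord :
    {q : Finset (Fin n) × Finset (Fin n) // IsBallotPair q.1 q.2} ≃
      {p : DyckWord // p.semilength = n} where
  toFun q := ⟨ballotPairToDyckWord q.1.1 q.1.2 q.2, semilength_ballotPairToDyckWord _ _ _⟩
  invFun p := ⟨p.1.toBallotPair n, p.1.isBallotPair_toBallotPair p.2⟩
  left_inv q := Subtype.ext (toBallotPair_ballotPairToDyckWord q.2)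
  right_inv p := Subtype.ext (DyckWord.ext (DyckWord.ballotWord_toBallotPair p.2))

end DyckWord

theorem Fin.sub_le_left_iff {n : ℕ} [NeZero n] (c a : Fin n) : c - a ≤ c ↔ a ≤ c := by
  by_cases h : a ≤ c
  · simp only [h, iff_true, Fin.le_def, Fin.coe_sub_iff_le.2 h]
    omega
  · have := Fin.coe_sub_iff_lt.2 (not_le.1 h)
    simp only [h, iff_false, Fin.le_def, this]
    omega

namespace Equiv.Perm

variable {n : ℕ}

variable (n) in
theorem card_avoids123 : Nat.card {π : Perm (Fin n) // π.Avoids123} = catalan n :=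
  calc Nat.card {π : Perm (Fin n) // π.Avoids123}
      = Nat.card {ρ : Perm (Fin n) // ρ.Avoids321} :=
        Nat.card_congr <|
          (Equiv.mulRight Fin.revPerm).subtypeEquiv avoids123_iff_avoids321_mul_revPerm
    _ = Nat.card {p : DyckWord // p.semilength = n} :=
        Nat.card_congr (avoids321EquivBallotPair.trans ballotPairEquivDyckWord)
    _ = catalan n := by
        rw [Nat.card_eq_fintype_card, DyckWord.card_dyckWord_semilength_eq_catalan]

theorem isDecomposable_iff (π : Perm (Fin n)) :
    π.IsDecomposable ↔ ∃ c : Fin n, (c : ℕ) + 1 < n ∧ ∀ a, a ≤ c ↔ π a ≤ c := by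
  refine ⟨fun ⟨i, hi₀, hin, h⟩ => ⟨⟨i - 1, by omega⟩, by simp; omega, fun a => ?_⟩,
    fun ⟨c, hc, h⟩ => ⟨(c : ℕ) + 1, by omega, hc, fun a => ?_⟩⟩
  · simp only [Fin.le_def]
    have := h a
    omega
  · have := h a
    simp only [Fin.le_def] at this
    omega

theorem avoids123_of_strictAntiOn {π : Perm (Fin n)} (c : Fin n)
    (h : StrictAntiOn π (Set.Iic c)) (hc : StrictAntiOn π (Set.Iic c)ᶜ) : π.Avoids123 := by
  rintro ⟨a, b, d, hab, hbd, hπab, hπbd⟩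
  by_cases hb : b ≤ c
  · exact (h (hab.le.trans hb : a ≤ c) hb hab).not_gt hπab
  · exact (hc hb (fun hd => hb (hbd.le.trans hd)) hbd).not_gt hπbd

theorem strictAntiOn_of_avoids123 {π : Perm (Fin n)} (hπ : π.Avoids123) {c : Fin n}
    (hc : (c : ℕ) + 1 < n) (hblock : ∀ a, a ≤ c ↔ π a ≤ c) :
    StrictAntiOn π (Set.Iic c) ∧ StrictAntiOn π (Set.Iic c)ᶜ := by
  refine ⟨fun a ha b hb hab => ?_, fun a ha b hb hab => ?_⟩
  · have hd : c < ⟨c + 1, hc⟩ := by simp [Fin.lt_def]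
    by_contra hle
    refine hπ ⟨a, b, ⟨c + 1, hc⟩, hab, lt_of_le_of_lt hb hd,
      (not_lt.1 hle).lt_of_ne (π.injective.ne hab.ne), ?_⟩
    exact lt_of_le_of_lt ((hblock b).1 hb) (not_le.1 fun h => hd.not_ge ((hblock _).2 h))
  · by_contra hle
    have hca : c < a := not_le.1 ha
    refine hπ ⟨c, a, b, hca, hab, ?_, (not_lt.1 hle).lt_of_ne (π.injective.ne hab.ne)⟩
    exact lt_of_le_of_lt ((hblock c).1 le_rfl) (not_le.1 fun h => ha ((hblock a).2 h))

theorem strictAntiOn_subLeft [NeZero n] (c : Fin n) :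
    StrictAntiOn (Equiv.subLeft c) (Set.Iic c) ∧
      StrictAntiOn (Equiv.subLeft c) (Set.Iic c)ᶜ := by
  refine ⟨fun a ha b hb hab => ?_, fun a ha b hb hab => ?_⟩
  · simp only [Equiv.subLeft_apply, Fin.lt_def, Fin.coe_sub_iff_le.2 ha,
      Fin.coe_sub_iff_le.2 hb]
    simp only [Set.mem_Iic, Fin.le_def, Fin.lt_def] at ha hb hab
    omega
  · have ha' := Fin.coe_sub_iff_lt.2 (not_le.1 ha)
    have hb' := Fin.coe_sub_iff_lt.2 (not_le.1 hb)
    simp only [Equiv.subLeft_apply, Fin.lt_def, ha', hb']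
    have := b.isLt
    rw [Fin.lt_def] at hab
    omega

theorem image_eq_self_of_forall_mem_iff {α : Type*} (σ : Perm α) {s : Set α}
    (h : ∀ a, a ∈ s ↔ σ a ∈ s) : σ '' s = s := by
  ext y
  exact ⟨fun ⟨x, hx, hxy⟩ => hxy ▸ (h x).1 hx,
    fun hy => ⟨σ.symm y, (h _).2 (by simpa), by simp⟩⟩

theorem isDecomposable_and_avoids123_iff [NeZero n] (π : Perm (Fin n)) :
    π.IsDecomposable ∧ π.Avoids123 ↔ ∃ c : Fin n, (c : ℕ) + 1 < n ∧ Equiv.subLeft c = π := by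
  rw [isDecomposable_iff]
  constructor
  · rintro ⟨⟨c, hc, hblock⟩, hπ⟩
    refine ⟨c, hc, ?_⟩
    have hanti := strictAntiOn_of_avoids123 hπ hc hblock
    refine Equiv.eq_of_strictAntiOn_of_strictAntiOn_compl (strictAntiOn_subLeft c).1
      (strictAntiOn_subLeft c).2 hanti.1 hanti.2 ?_
    rw [image_eq_self_of_forall_mem_iff (s := Set.Iic c) (Equiv.subLeft c)
        fun a => (Fin.sub_le_left_iff c a).symm,
      image_eq_self_of_forall_mem_iff (s := Set.Iic c) _ hblock]
  · rintro ⟨c, hc, rfl⟩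
    refine ⟨⟨c, hc, fun a => (Fin.sub_le_left_iff c a).symm⟩, ?_⟩
    exact avoids123_of_strictAntiOn c (strictAntiOn_subLeft c).1 (strictAntiOn_subLeft c).2

variable (n) in
theorem card_isDecomposable_and_avoids123 :
    Nat.card {π : Perm (Fin n) // π.IsDecomposable ∧ π.Avoids123} = n - 1 := by
  cases n with
  | zero =>
    have : IsEmpty {π : Perm (Fin 0) // π.IsDecomposable ∧ π.Avoids123} :=
      ⟨fun ⟨_, ⟨_, hi₀, hi, _⟩, _⟩ => by omega⟩
    simp
  | succ m =>
    classical
    have himage : ({π | π.IsDecomposable ∧ π.Avoids123} : Finset (Perm (Fin (m + 1)))) =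
        ({c | (c : ℕ) + 1 < m + 1} : Finset (Fin (m + 1))).image Equiv.subLeft := by
      ext π
      simp [isDecomposable_and_avoids123_iff]
    have hinj : Function.Injective (Equiv.subLeft : Fin (m + 1) → Perm (Fin (m + 1))) :=
      fun c d h => by simpa using DFunLike.congr_fun h 0
    rw [Nat.card_eq_fintype_card, Fintype.card_subtype, himage, card_image_of_injective _ hinj]
    simp [Fin.card_filter_val_lt]

end Equiv.Perm

theorem Nat.card_subtype_eq_card_and_add_card_not_and {α : Type*} [Finite α]
    (p q : α → Prop) :
    Nat.card {x // p x} = Nat.card {x // q x ∧ p x} + Nat.card {x // ¬ q x ∧ p x} := by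
  classical
  have := Fintype.ofFinite α
  simp only [Nat.card_eq_fintype_card, Fintype.card_subtype]
  rw [← card_filter_add_card_filter_not q (s := {x | p x}), filter_filter, filter_filter]
  simp only [and_comm]

theorem stmt1_general (n : ℕ) :
    Nat.card {π : Equiv.Perm (Fin n) //
      (¬ ∃ i : ℕ, 0 < i ∧ i < n ∧ ∀ a : Fin n, a.val < i ↔ (π a).val < i) ∧
      ¬ ∃ a b c : Fin n, a < b ∧ b < c ∧ π a < π b ∧ π b < π c} =
    catalan n - (n - 1) := by
  change Nat.card {π : Equiv.Perm (Fin n) // ¬ π.IsDecomposable ∧ π.Avoids123} = _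
  have hsplit := Nat.card_subtype_eq_card_and_add_card_not_and (Equiv.Perm.Avoids123 (n := n))
    Equiv.Perm.IsDecomposable
  rw [Equiv.Perm.card_avoids123, Equiv.Perm.card_isDecomposable_and_avoids123] at hsplit
  omega

/-- For n ≥ 1, the number of indecomposable 123-avoiding permutations
of {1,...,n} is Cₙ - (n-1). -/
theorem stmt1 (n : ℕ) (hn : 1 ≤ n) :
    Nat.card {π : Equiv.Perm (Fin n) //
      (¬ ∃ i : ℕ, 0 < i ∧ i < n ∧ ∀ a : Fin n, a.val < i ↔ (π a).val < i) ∧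
      ¬ ∃ a b c : Fin n, a < b ∧ b < c ∧ π a < π b ∧ π b < π c} =
    catalan n - (n - 1) :=
  stmt1_general n
end

section
/- For every n ≥ 2, the number of indecomposable permutations of {1,...,n} that avoid the pattern 132 equals C_n − C_{n−1}, where C_n is the n-th Catalan number. -/
/-!
In a 132-avoiding permutation whose maximum sits at position `k`, every entry to the left of
the maximum is larger than every entry to its right (otherwise they form a 132 with the
maximum). Hence the permutation is `σ' max τ`, where `τ` is a 132-avoider of the smallest values
and `σ'` one of the next `k` values, and conversely every such concatenation avoids 132. Summing
over `k` gives the Catalan recursion, so there are `C_n` avoiders of length `n`. For `n ≥ 2` a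
132-avoider is decomposable exactly when it ends with its maximum, and those are counted by
`C_{n-1}`.
-/

open Equiv Finset

section Pattern

variable {α β γ δ : Type*}

def Avoids132 [Preorder α] [Preorder β] (f : α → β) : Prop :=
  ¬ ∃ a b c, a < b ∧ b < c ∧ f a < f c ∧ f c < f b

theorem Avoids132.comp_strictMono [Preorder α] [Preorder β] [Preorder γ] {f : α → β}
    (hf : Avoids132 f) {g : γ → α} (hg : StrictMono g) : Avoids132 (f ∘ g) :=
  fun ⟨a, b, c, hab, hbc, hac, hcb⟩ => hf ⟨g a, g b, g c, hg hab, hg hbc, hac, hcb⟩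

theorem StrictMono.avoids132_comp_iff [Preorder α] [LinearOrder β] [Preorder γ] {f : α → β}
    {g : β → γ} (hg : StrictMono g) : Avoids132 (g ∘ f) ↔ Avoids132 f := by
  simp only [Avoids132, Function.comp_apply, hg.lt_iff_lt]

theorem Avoids132.apply_lt_apply [Preorder α] [LinearOrder β] {f : α → β} (hf : Avoids132 f)
    (hinj : Function.Injective f) {p : α} (hp : ∀ z, f z ≤ f p) {x y : α} (hxp : x < p)
    (hpy : p < y) : f y < f x := by
  by_contra! hle
  have hxy : f x < f y := hle.lt_of_ne (hinj.ne (hxp.trans hpy).ne)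
  exact hf ⟨x, p, y, hxp, hpy, hxy, (hp y).lt_of_ne (hinj.ne hpy.ne')⟩

theorem avoids132_of_split [LinearOrder α] [LinearOrder β] [LinearOrder γ] [LinearOrder δ]
    {f : α → β} {p : α} (hp : ∀ z, f z ≤ f p) (hsplit : ∀ x y, x < p → p < y → f y < f x)
    {l : γ → α} (hl : StrictMono l) (hl_range : ∀ x < p, x ∈ Set.range l) (hfl : Avoids132 (f ∘ l))
    {r : δ → α} (hr : StrictMono r) (hr_range : ∀ y, p < y → y ∈ Set.range r)
    (hfr : Avoids132 (f ∘ r)) : Avoids132 f := by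
  rintro ⟨a, b, c, hab, hbc, hac, hcb⟩
  rcases lt_trichotomy c p with hcp | rfl | hpc
  · obtain ⟨a, rfl⟩ := hl_range a (hab.trans (hbc.trans hcp))
    obtain ⟨b, rfl⟩ := hl_range b (hbc.trans hcp)
    obtain ⟨c, rfl⟩ := hl_range c hcp
    exact hfl ⟨a, b, c, hl.lt_iff_lt.1 hab, hl.lt_iff_lt.1 hbc, hac, hcb⟩
  · exact (hcb.trans_le (hp b)).false
  · rcases lt_trichotomy a p with hap | rfl | hpa
    · exact (hsplit a c hap hpc).not_gt hac
    · exact (hac.trans_le (hp c)).false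
    obtain ⟨a, rfl⟩ := hr_range a hpa
    obtain ⟨b, rfl⟩ := hr_range b (hpa.trans hab)
    obtain ⟨c, rfl⟩ := hr_range c hpc
    exact hfr ⟨a, b, c, hr.lt_iff_lt.1 hab, hr.lt_iff_lt.1 hbc, hac, hcb⟩

end Pattern

section Counting

variable {α : Type*} {N : ℕ}

theorem card_le_val_of_forall_apply_lt {f : α → Fin N} {s : Finset α} (hf : Set.InjOn f s)
    {v : Fin N} (h : ∀ y ∈ s, f y < v) : #s ≤ v := by
  simpa using card_le_card_of_injOn f (fun y hy => mem_Iio.2 (h y hy)) hf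

theorem card_le_of_forall_lt_apply {f : α → Fin N} {s : Finset α} (hf : Set.InjOn f s)
    {v : Fin N} (h : ∀ y ∈ s, v < f y) : #s ≤ N - 1 - v := by
  simpa using card_le_card_of_injOn f (fun y hy => mem_Ioi.2 (h y hy)) hf

end Counting

section Glue

variable {k m : ℕ}

def glueMaxFun (σ : Perm (Fin k)) (τ : Perm (Fin m)) (i : Fin (k + m + 1)) : Fin (k + m + 1) :=
  if h : i.val < k then ⟨m + σ ⟨i, h⟩, by omega⟩
  else if h' : i.val = k then Fin.last _
  else Fin.castLE (by omega) (τ ⟨i - (k + 1), by omega⟩)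

theorem glueMaxFun_injective (σ : Perm (Fin k)) (τ : Perm (Fin m)) :
    Function.Injective (glueMaxFun σ τ) := by
  intro i j h
  simp only [glueMaxFun] at h
  split_ifs at h <;> simp only [Fin.ext_iff, Fin.val_last, Fin.val_castLE] at h ⊢ <;>
    grind [σ.apply_eq_iff_eq, τ.apply_eq_iff_eq]

/-- The permutation `σ' (k+m) τ` of `Fin (k + m + 1)`, where `σ'` is `σ` shifted up by `m`:
the shape of every 132-avoider whose maximum sits at position `k`. -/
noncomputable def glueMax (σ : Perm (Fin k)) (τ : Perm (Fin m)) : Perm (Fin (k + m + 1)) :=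
  .ofBijective (glueMaxFun σ τ) (Finite.injective_iff_bijective.1 (glueMaxFun_injective σ τ))

variable (σ : Perm (Fin k)) (τ : Perm (Fin m))

theorem val_glueMax_of_lt {i : Fin (k + m + 1)} (h : i.val < k) :
    (glueMax σ τ i).val = m + σ ⟨i, h⟩ := by
  simp [glueMax, glueMaxFun, h]

theorem glueMax_apply_mid : glueMax σ τ ⟨k, by omega⟩ = Fin.last _ := by
  simp [glueMax, glueMaxFun]

theorem val_glueMax_of_gt {i : Fin (k + m + 1)} (h : k < i.val) :
    (glueMax σ τ i).val = τ ⟨i - (k + 1), by omega⟩ := by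
  simp [glueMax, glueMaxFun, h.not_gt, h.ne']

theorem val_glueMax_left (i : Fin k) : (glueMax σ τ ⟨i, by omega⟩).val = m + σ i :=
  val_glueMax_of_lt σ τ i.isLt

theorem val_glueMax_right (j : Fin m) : (glueMax σ τ ⟨k + 1 + j, by omega⟩).val = τ j := by
  rw [val_glueMax_of_gt σ τ (by dsimp only; omega)]
  simp

theorem glueMax_injective {σ' : Perm (Fin k)} {τ' : Perm (Fin m)}
    (h : glueMax σ τ = glueMax σ' τ') : σ = σ' ∧ τ = τ' := by
  constructor <;> ext i
  · have := val_glueMax_left σ τ i; rw [h, val_glueMax_left] at this; omega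
  · have := val_glueMax_right σ τ i; rw [h, val_glueMax_right] at this; omega

theorem avoids132_glueMax_iff : Avoids132 (glueMax σ τ) ↔ Avoids132 σ ∧ Avoids132 τ := by
  have hσ : Avoids132 σ ↔
      Avoids132 (Fin.val ∘ glueMax σ τ ∘ fun i : Fin k => ⟨i, by omega⟩) := by
    rw [← (strictMono_id.const_add m |>.comp Fin.val_strictMono).avoids132_comp_iff]
    exact iff_of_eq (congrArg _ (funext fun i => (val_glueMax_left σ τ i).symm))
  have hτ : Avoids132 τ ↔
      Avoids132 (Fin.val ∘ glueMax σ τ ∘ fun j : Fin m => ⟨k + 1 + j, by omega⟩) := by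
    rw [← Fin.val_strictMono.avoids132_comp_iff]
    exact iff_of_eq (congrArg _ (funext fun j => (val_glueMax_right σ τ j).symm))
  have hleft : StrictMono fun i : Fin k => (⟨i, by omega⟩ : Fin (k + m + 1)) := fun _ _ h => h
  have hright : StrictMono fun j : Fin m => (⟨k + 1 + j, by omega⟩ : Fin (k + m + 1)) :=
    fun _ _ h => Nat.add_lt_add_left h _
  simp only [hσ, hτ, Fin.val_strictMono.avoids132_comp_iff]
  constructor
  · intro h
    exact ⟨h.comp_strictMono hleft, h.comp_strictMono hright⟩
  · rintro ⟨hσ, hτ⟩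
    refine avoids132_of_split (p := ⟨k, by omega⟩) (fun z => ?_) (fun x y hx hy => ?_)
      hleft (fun x hx => ⟨⟨x, hx⟩, rfl⟩) hσ hright (fun y hy => ⟨⟨y - (k + 1), ?_⟩, ?_⟩) hτ
    · rw [glueMax_apply_mid]; exact Fin.le_last _
    · rw [Fin.lt_def, val_glueMax_of_lt σ τ hx, val_glueMax_of_gt σ τ hy]; omega
    · change k < y.val at hy; omega
    · change k < y.val at hy; ext; dsimp only; omega

end Glue

section MaxPosition

variable {k m : ℕ} {π : Perm (Fin (k + m + 1))}

theorem Avoids132.le_val_apply_left (hπ : Avoids132 π) (hk : π ⟨k, by omega⟩ = Fin.last _)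
    (i : Fin k) : m ≤ π ⟨i, by omega⟩ := by
  have hmax : ∀ z, π z ≤ π ⟨k, by omega⟩ := fun z => hk ▸ Fin.le_last _
  -- the `m` entries right of the maximum all lie below `π i`
  have := card_le_val_of_forall_apply_lt (s := Ioi ⟨k, by omega⟩) π.injective.injOn
    fun y hy => hπ.apply_lt_apply π.injective hmax (x := ⟨i, by omega⟩) i.isLt (mem_Ioi.1 hy)
  simpa [Fin.card_Ioi] using this

theorem Avoids132.val_apply_right_lt (hπ : Avoids132 π) (hk : π ⟨k, by omega⟩ = Fin.last _)
    (j : Fin m) : π ⟨k + 1 + j, by omega⟩ < m := by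
  have hmax : ∀ z, π z ≤ π ⟨k, by omega⟩ := fun z => hk ▸ Fin.le_last _
  -- the `k + 1` entries up to the maximum all lie above `π j`
  have := card_le_of_forall_lt_apply (s := Iic ⟨k, by omega⟩) (v := π ⟨k + 1 + j, by omega⟩)
    π.injective.injOn fun x hx => ?_
  · rw [Fin.card_Iic] at this; dsimp only at this; omega
  rcases (mem_Iic.1 hx).lt_or_eq with hx | rfl
  · exact hπ.apply_lt_apply π.injective hmax hx (by show k < k + 1 + j; omega)
  · exact hk ▸ (Fin.le_last _).lt_of_ne (hk ▸ π.injective.ne (by simp [Fin.ext_iff]; omega))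

theorem Avoids132.exists_glueMax_eq (hπ : Avoids132 π) (hk : π ⟨k, by omega⟩ = Fin.last _) :
    ∃ σ τ, glueMax σ τ = π := by
  have hleft (i : Fin k) : m ≤ π ⟨i, by omega⟩ ∧ π ⟨i, by omega⟩ < k + m := by
    refine ⟨hπ.le_val_apply_left hk i, Fin.val_lt_last ?_⟩
    exact hk ▸ π.injective.ne (by simp [Fin.ext_iff]; omega)
  have hright := hπ.val_apply_right_lt hk
  let σ : Perm (Fin k) :=
    .ofBijective (fun i => ⟨π ⟨i, by omega⟩ - m, by have := hleft i; omega⟩) <|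
    Finite.injective_iff_bijective.1 fun i i' h => by
      have := hleft i; have := hleft i'
      have := π.injective (a₁ := ⟨i, by omega⟩) (a₂ := ⟨i', by omega⟩)
        (Fin.ext (by simp only [Fin.mk.injEq] at h; omega))
      simpa [Fin.ext_iff] using this
  let τ : Perm (Fin m) := .ofBijective (fun j => ⟨π ⟨k + 1 + j, by omega⟩, hright j⟩) <|
    Finite.injective_iff_bijective.1 fun j j' h => by
      have := π.injective (a₁ := ⟨k + 1 + j, by omega⟩) (a₂ := ⟨k + 1 + j', by omega⟩)
        (Fin.ext (by simpa only [Fin.mk.injEq] using h))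
      simpa [Fin.ext_iff] using this
  refine ⟨σ, τ, Equiv.ext fun i => Fin.ext ?_⟩
  rcases lt_trichotomy i.val k with hi | hi | hi
  · rw [val_glueMax_of_lt σ τ hi]
    have := hleft ⟨i, hi⟩
    simp only [σ, Equiv.ofBijective_apply, Fin.eta] at this ⊢
    omega
  · rw [show i = ⟨k, by omega⟩ from Fin.ext hi, glueMax_apply_mid, hk]
  · rw [val_glueMax_of_gt σ τ hi]
    simp only [τ, Equiv.ofBijective_apply]
    congr 2
    ext
    dsimp only
    omega

end MaxPosition

theorem card_avoids132_glueMax (k m : ℕ) :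
    Nat.card {π : Perm (Fin (k + m + 1)) // Avoids132 π ∧ π ⟨k, by omega⟩ = Fin.last _} =
      Nat.card {σ : Perm (Fin k) // Avoids132 σ} * Nat.card {τ : Perm (Fin m) // Avoids132 τ} := by
  rw [← Nat.card_prod]
  refine (Nat.card_congr (.ofBijective (fun στ => ⟨glueMax στ.1.1 στ.2.1,
    (avoids132_glueMax_iff _ _).2 ⟨στ.1.2, στ.2.2⟩, glueMax_apply_mid _ _⟩) ⟨?_, ?_⟩)).symm
  · intro ⟨⟨σ, _⟩, ⟨τ, _⟩⟩ ⟨⟨σ', _⟩, ⟨τ', _⟩⟩ h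
    obtain ⟨rfl, rfl⟩ := glueMax_injective _ _ (congrArg Subtype.val h)
    rfl
  · rintro ⟨π, hπ, hk⟩
    obtain ⟨σ, τ, rfl⟩ := hπ.exists_glueMax_eq hk
    obtain ⟨hσ, hτ⟩ := (avoids132_glueMax_iff σ τ).1 hπ
    exact ⟨⟨⟨σ, hσ⟩, ⟨τ, hτ⟩⟩, rfl⟩

theorem card_avoids132_apply_eq_last {n : ℕ} (p : Fin (n + 1)) :
    Nat.card {π : Perm (Fin (n + 1)) // Avoids132 π ∧ π p = Fin.last n} =
      Nat.card {σ : Perm (Fin p) // Avoids132 σ} *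
        Nat.card {τ : Perm (Fin (n - p)) // Avoids132 τ} := by
  obtain ⟨k, hk⟩ := p
  obtain ⟨m, rfl⟩ : ∃ m, n = k + m := ⟨n - k, by omega⟩
  rw [Nat.add_sub_cancel_left]
  exact card_avoids132_glueMax k m

theorem card_avoids132 (n : ℕ) : Nat.card {π : Perm (Fin n) // Avoids132 π} = catalan n := by
  induction n using Nat.strong_induction_on with
  | _ n ih =>
  cases n with
  | zero =>
    have : Unique {π : Perm (Fin 0) // Avoids132 π} :=
      ⟨⟨⟨1, fun ⟨a, _⟩ => a.elim0⟩⟩, fun _ => Subsingleton.elim _ _⟩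
    simp
  | succ n =>
    let posOfMax (π : {π : Perm (Fin (n + 1)) // Avoids132 π}) := π.1.symm (Fin.last n)
    rw [catalan_succ, ← Nat.card_congr (Equiv.sigmaFiberEquiv posOfMax), Nat.card_sigma]
    refine Finset.sum_congr rfl fun p _ => ?_
    rw [← ih p (by omega), ← ih (n - p) (by omega), ← card_avoids132_apply_eq_last]
    refine Nat.card_congr ((Equiv.subtypeSubtypeEquivSubtypeInter
      (fun π : Perm (Fin (n + 1)) => Avoids132 π) (fun π => π.symm (Fin.last n) = p)).trans
      (Equiv.subtypeEquivRight fun π => ?_))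
    rw [Equiv.symm_apply_eq, eq_comm]

def Equiv.Perm.IsDecomposable_s2 {n : ℕ} (π : Perm (Fin n)) : Prop :=
  ∃ i, 0 < i ∧ i < n ∧ ∀ a : Fin n, a.val < i ↔ (π a).val < i

theorem Avoids132.isDecomposable_iff {m : ℕ} (hm : 1 ≤ m) {π : Perm (Fin (m + 1))}
    (hπ : Avoids132 π) : π.IsDecomposable_s2 ↔ π (Fin.last m) = Fin.last m := by
  constructor
  · rintro ⟨i, hi0, him, hblock⟩
    set c := π.symm (Fin.last m)
    have hc : π c = Fin.last m := π.apply_symm_apply _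
    set a := π.symm ⟨0, by omega⟩
    have ha : π a = ⟨0, by omega⟩ := π.apply_symm_apply _
    have hai : a.val < i := (hblock a).2 (by rwa [ha])
    have hic : i ≤ c.val := by
      by_contra! hci
      have := (hblock c).1 hci
      rw [hc, Fin.val_last] at this
      omega
    -- otherwise `a < c < last` with `π a = 0` and `π c` maximal would be a 132
    by_contra hne
    have hclast : c < Fin.last m := (Fin.le_last c).lt_of_ne fun h => hne (h ▸ hc)
    have := hπ.apply_lt_apply π.injective (p := c) (fun z => hc ▸ Fin.le_last _)
      (show a < c from Fin.lt_def.2 (by omega)) hclast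
    rw [ha] at this
    exact Fin.not_lt_zero _ this
  · intro hlast
    refine ⟨m, by omega, by omega, fun a => ?_⟩
    have hval_lt (b : Fin (m + 1)) : b.val < m ↔ b ≠ Fin.last m := Fin.lt_last_iff_ne_last
    rw [hval_lt, hval_lt]
    exact not_congr (by rw [← π.injective.eq_iff, hlast])

theorem Nat.card_subtype_not_and {α : Type*} [Finite α] (p q : α → Prop) :
    Nat.card {x // ¬ q x ∧ p x} = Nat.card {x // p x} - Nat.card {x // q x ∧ p x} := by
  classical
  have := Fintype.ofFinite α
  have h (r : α → Prop) : Nat.card {x // r x ∧ p x} = Nat.card {x : {x // p x} // r x} :=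
    Nat.card_congr ((Equiv.subtypeEquivRight fun _ => and_comm).trans
      (Equiv.subtypeSubtypeEquivSubtypeInter p r).symm)
  rw [h, h]
  simp only [Nat.card_eq_fintype_card]
  exact Fintype.card_subtype_compl _

/-- For n ≥ 2, the number of indecomposable 132-avoiding permutations
of {1,...,n} is Cₙ - Cₙ₋₁. -/
theorem stmt2 (n : ℕ) (hn : 2 ≤ n) :
    Nat.card {π : Equiv.Perm (Fin n) //
      (¬ ∃ i : ℕ, 0 < i ∧ i < n ∧ ∀ a : Fin n, a.val < i ↔ (π a).val < i) ∧
      ¬ ∃ a b c : Fin n, a < b ∧ b < c ∧ π a < π c ∧ π c < π b} =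
    catalan n - catalan (n - 1) := by
  obtain ⟨m, rfl⟩ : ∃ m, n = m + 1 := ⟨n - 1, by omega⟩
  have hdecomp : Nat.card {π : Perm (Fin (m + 1)) // π.IsDecomposable_s2 ∧ Avoids132 π} =
      catalan m := by
    rw [Nat.card_congr (Equiv.subtypeEquivRight fun π => (and_congr_left fun hπ =>
      hπ.isDecomposable_iff (by omega)).trans and_comm), card_avoids132_apply_eq_last,
      card_avoids132, card_avoids132]
    simp
  change Nat.card {π : Perm (Fin (m + 1)) // ¬ π.IsDecomposable_s2 ∧ Avoids132 π} = _
  rw [Nat.card_subtype_not_and, card_avoids132, hdecomp, Nat.add_sub_cancel]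
end

section
/- Let π be a permutation of {1,...,n} that is decomposable, with first component of length i (i.e., i is the smallest index with {π(1),...,π(i)} = {1,...,i}, and i < n). Then π avoids the pattern 132 if and only if the first component π(1)⋯π(i) avoids 132 and π(i+1)⋯π(n) is the increasing sequence (i+1)(i+2)⋯n. -/
/-! If `π` avoids `132`, every descent in the tail would form a `132` together with an entry of
the first block, so `π` is increasing on the tail; being a permutation of the tail, it is then the
identity there. Conversely, a `132` pattern cannot end at a fixed tail entry `c`: its middle entry
would have to exceed `c`, but values in the first block are below `i` and tail entries before `c`
are smaller than `c`. -/

namespace Equiv.Perm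

theorem eq_one_of_strictMono {α : Type*} [LinearOrder α] [WellFoundedLT α]
    {σ : Perm α} (hσ : StrictMono σ) : σ = 1 := by
  ext a
  exact congrArg (· a)
    (Subsingleton.elim (hσ.orderIsoOfSurjective σ σ.surjective) (OrderIso.refl α))

end Equiv.Perm

section Blocks

variable {n i : ℕ} {π : Equiv.Perm (Fin n)}

theorem le_val_apply_iff_of_lt_iff (hcut : ∀ a : Fin n, a.val < i ↔ (π a).val < i)
    (a : Fin n) : i ≤ (π a).val ↔ i ≤ a.val := by
  simpa only [not_lt] using (hcut a).not.symm

theorem strictMonoOn_tail_of_avoids_132 (hi0 : 0 < i)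
    (hcut : ∀ a : Fin n, a.val < i ↔ (π a).val < i)
    (h132 : ¬ ∃ a b c : Fin n, a < b ∧ b < c ∧ π a < π c ∧ π c < π b) :
    StrictMonoOn π {a | i ≤ a.val} := by
  intro b (hb : i ≤ b.val) c _ hbc
  by_contra! hcb
  have hcb : π c < π b := hcb.lt_of_ne (π.injective.ne hbc.ne')
  have hfirst : (π ⟨0, by omega⟩).val < i := (hcut _).mp hi0
  have hc : i ≤ (π c).val := (le_val_apply_iff_of_lt_iff hcut c).mpr (by omega)
  exact h132 ⟨⟨0, by omega⟩, b, c, Fin.lt_def.mpr (by simp; omega), hbc,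
    Fin.lt_def.mpr (by omega), hcb⟩

theorem apply_eq_self_of_strictMonoOn_tail (hcut : ∀ a : Fin n, a.val < i ↔ (π a).val < i)
    (hmono : StrictMonoOn π {a | i ≤ a.val}) (a : Fin n) (ha : i ≤ a.val) : π a = a := by
  have hσ : π.subtypePerm (p := fun b => i ≤ b.val) (le_val_apply_iff_of_lt_iff hcut) = 1 := Equiv.Perm.eq_one_of_strictMono fun b c hbc => hmono b.2 c.2 hbc
  exact congrArg Subtype.val (DFunLike.congr_fun hσ ⟨a, ha⟩)

theorem avoids_132_of_tail_eq_self (hcut : ∀ a : Fin n, a.val < i ↔ (π a).val < i)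
    (hfirst : ¬ ∃ a b c : Fin n, a < b ∧ b < c ∧ c.val < i ∧ π a < π c ∧ π c < π b)
    (htail : ∀ a : Fin n, i ≤ a.val → π a = a) :
    ¬ ∃ a b c : Fin n, a < b ∧ b < c ∧ π a < π c ∧ π c < π b := by
  rintro ⟨a, b, c, hab, hbc, hac, hcb⟩
  by_cases hc : c.val < i
  · exact hfirst ⟨a, b, c, hab, hbc, hc, hac, hcb⟩
  rw [htail c (by omega)] at hcb
  by_cases hb : i ≤ b.val
  · rw [htail b hb] at hcb
    exact hcb.not_gt hbc
  · have := (hcut b).mp (by omega)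
    rw [Fin.lt_def] at hcb
    omega

end Blocks

theorem stmt4_general (n i : ℕ) (π : Equiv.Perm (Fin n))
    (hi0 : 0 < i)
    (hcut : ∀ a : Fin n, a.val < i ↔ (π a).val < i) :
    (¬ ∃ a b c : Fin n, a < b ∧ b < c ∧ π a < π c ∧ π c < π b) ↔
    ((¬ ∃ a b c : Fin n, a < b ∧ b < c ∧ c.val < i ∧ π a < π c ∧ π c < π b) ∧
      ∀ a : Fin n, i ≤ a.val → π a = a) := by
  refine ⟨fun h132 => ⟨?_, ?_⟩,
    fun ⟨hfirst, htail⟩ => avoids_132_of_tail_eq_self hcut hfirst htail⟩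
  · rintro ⟨a, b, c, hab, hbc, -, hac, hcb⟩
    exact h132 ⟨a, b, c, hab, hbc, hac, hcb⟩
  · exact apply_eq_self_of_strictMonoOn_tail hcut (strictMonoOn_tail_of_avoids_132 hi0 hcut h132)

/-- A decomposable permutation with first component of length i avoids
132 iff the first component avoids 132 and the suffix is increasing (i+1)(i+2)⋯n. -/
theorem stmt4 (n i : ℕ) (π : Equiv.Perm (Fin n))
    (hi0 : 0 < i) (hin : i < n)
    (hcut : ∀ a : Fin n, a.val < i ↔ (π a).val < i)
    (hmin : ∀ j : ℕ, 0 < j → j < i → ¬ ∀ a : Fin n, a.val < j ↔ (π a).val < j) :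
    (¬ ∃ a b c : Fin n, a < b ∧ b < c ∧ π a < π c ∧ π c < π b) ↔
    ((¬ ∃ a b c : Fin n, a < b ∧ b < c ∧ c.val < i ∧ π a < π c ∧ π c < π b) ∧
      ∀ a : Fin n, i ≤ a.val → π a = a) :=
  stmt4_general n i π hi0 hcut
end

section
/- Let π be a permutation of {1,...,n} that is decomposable, with first component π^(1) = π(1)⋯π(i) where i = i_π < n. Then π avoids the pattern 2314 if and only if π^(1) avoids the pattern 231 and the suffix π(i+1)⋯π(n) avoids the pattern 2314. -/
/-! Every value of the first component is smaller than every value after it. Hence a 2314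
starting in the first component has its `1` there as well and so restricts to a 231 of the
first component; conversely, the entry at position `i` extends any such 231 to a 2314. -/

section Cut

variable {n i : ℕ} {π : Equiv.Perm (Fin n)}

theorem Equiv.Perm.apply_lt_apply_of_lt_cut (hcut : ∀ a : Fin n, a.val < i ↔ (π a).val < i)
    {a d : Fin n} (ha : a.val < i) (hd : i ≤ d.val) : π a < π d :=
  Fin.lt_def.mpr <| lt_of_lt_of_le ((hcut a).mp ha) <|
    le_of_not_gt fun h => absurd ((hcut d).mpr h) (not_lt.mpr hd)

theorem Equiv.Perm.lt_cut_of_apply_lt (hcut : ∀ a : Fin n, a.val < i ↔ (π a).val < i)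
    {a c : Fin n} (ha : a.val < i) (h : π c < π a) : c.val < i :=
  (hcut c).mpr <| lt_trans (Fin.lt_def.mp h) ((hcut a).mp ha)

end Cut

theorem stmt5_general (n i : ℕ) (π : Equiv.Perm (Fin n))
    (hin : i < n)
    (hcut : ∀ a : Fin n, a.val < i ↔ (π a).val < i) :
    (¬ ∃ a b c d : Fin n, a < b ∧ b < c ∧ c < d ∧
        π c < π a ∧ π a < π b ∧ π b < π d) ↔
    ((¬ ∃ a b c : Fin n, a < b ∧ b < c ∧ c.val < i ∧ π c < π a ∧ π a < π b) ∧
      ¬ ∃ a b c d : Fin n, i ≤ a.val ∧ a < b ∧ b < c ∧ c < d ∧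
        π c < π a ∧ π a < π b ∧ π b < π d) := by
  constructor
  · intro h
    constructor
    · rintro ⟨a, b, c, hab, hbc, hci, hπca, hπab⟩
      have hbi : b.val < i := lt_trans (Fin.lt_def.mp hbc) hci
      exact h ⟨a, b, c, ⟨i, hin⟩, hab, hbc, Fin.lt_def.mpr hci, hπca, hπab,
        π.apply_lt_apply_of_lt_cut hcut hbi le_rfl⟩
    · rintro ⟨a, b, c, d, -, pattern⟩
      exact h ⟨a, b, c, d, pattern⟩
  · rintro ⟨hfirst, hsuffix⟩ ⟨a, b, c, d, hab, hbc, hcd, hπca, hπab, hπbd⟩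
    rcases lt_or_ge a.val i with ha | ha
    · exact hfirst ⟨a, b, c, hab, hbc, π.lt_cut_of_apply_lt hcut ha hπca, hπca, hπab⟩
    · exact hsuffix ⟨a, b, c, d, ha, hab, hbc, hcd, hπca, hπab, hπbd⟩

/-- A decomposable permutation with first component of length i avoids
2314 iff the first component avoids 231 and the suffix avoids 2314. -/
theorem stmt5 (n i : ℕ) (π : Equiv.Perm (Fin n))
    (hi0 : 0 < i) (hin : i < n)
    (hcut : ∀ a : Fin n, a.val < i ↔ (π a).val < i)
    (hmin : ∀ j : ℕ, 0 < j → j < i → ¬ ∀ a : Fin n, a.val < j ↔ (π a).val < j) :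
    (¬ ∃ a b c d : Fin n, a < b ∧ b < c ∧ c < d ∧
        π c < π a ∧ π a < π b ∧ π b < π d) ↔
    ((¬ ∃ a b c : Fin n, a < b ∧ b < c ∧ c.val < i ∧ π c < π a ∧ π a < π b) ∧
      ¬ ∃ a b c d : Fin n, i ≤ a.val ∧ a < b ∧ b < c ∧ c < d ∧
        π c < π a ∧ π a < π b ∧ π b < π d) :=
  stmt5_general n i π hin hcut
end

section
/- Let π be a permutation of {1,...,n} that is decomposable with first component π^(1) = π(1)⋯π(i), i = i_π < n. Then π avoids the pattern 3124 if and only if π^(1) avoids the pattern 312 and the suffix π(i+1)⋯π(n) avoids 3124. -/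
/-! Since `π` maps the positions `< i` onto the values `< i`, every entry of the first component
is smaller than every entry after it. Hence an occurrence of `312` in the first component
extends to `3124` by the entry at position `i`. Conversely, in an occurrence of `3124` whose `3`
lies in the first component, the `2` is smaller than the `3`, so it lies there too and the first
three entries form a `312` in the first component; otherwise the whole occurrence lies in the
suffix. -/

section BlockStructure

variable {n m i : ℕ} {f : Fin n → Fin m}

lemma apply_lt_apply_of_lt_of_le (hcut : ∀ a : Fin n, a.val < i ↔ (f a).val < i)
    {a d : Fin n} (ha : a.val < i) (hd : i ≤ d.val) : f a < f d := by
  have hfa := (hcut a).1 ha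
  have hfd : ¬ (f d).val < i := by rw [← hcut d]; omega
  rw [Fin.lt_def]
  omega

lemma val_lt_of_apply_lt_apply (hcut : ∀ a : Fin n, a.val < i ↔ (f a).val < i)
    {a c : Fin n} (ha : a.val < i) (hca : f c < f a) : c.val < i :=
  (hcut c).2 (lt_trans hca ((hcut a).1 ha))

end BlockStructure

theorem stmt6_general (n i : ℕ) (π : Equiv.Perm (Fin n))
    (hin : i < n)
    (hcut : ∀ a : Fin n, a.val < i ↔ (π a).val < i) :
    (¬ ∃ a b c d : Fin n, a < b ∧ b < c ∧ c < d ∧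
        π b < π c ∧ π c < π a ∧ π a < π d) ↔
    ((¬ ∃ a b c : Fin n, a < b ∧ b < c ∧ c.val < i ∧ π b < π c ∧ π c < π a) ∧
      ¬ ∃ a b c d : Fin n, i ≤ a.val ∧ a < b ∧ b < c ∧ c < d ∧
        π b < π c ∧ π c < π a ∧ π a < π d) := by
  constructor
  · intro h
    constructor
    · rintro ⟨a, b, c, hab, hbc, hci, p1, p2⟩
      have hcd : c < ⟨i, hin⟩ := hci
      have ha : a.val < i := lt_trans (lt_trans hab hbc) hci
      exact h ⟨a, b, c, ⟨i, hin⟩, hab, hbc, hcd, p1, p2,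
        apply_lt_apply_of_lt_of_le hcut ha le_rfl⟩
    · rintro ⟨a, b, c, d, -, occurrence⟩
      exact h ⟨a, b, c, d, occurrence⟩
  · rintro ⟨h312, h3124⟩ ⟨a, b, c, d, hab, hbc, hcd, p1, p2, p3⟩
    rcases le_or_gt i a.val with ha | ha
    · exact h3124 ⟨a, b, c, d, ha, hab, hbc, hcd, p1, p2, p3⟩
    · exact h312 ⟨a, b, c, hab, hbc, val_lt_of_apply_lt_apply hcut ha p2, p1, p2⟩

/-- A decomposable permutation with first component of length i avoids
3124 iff the first component avoids 312 and the suffix avoids 3124. -/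
theorem stmt6 (n i : ℕ) (π : Equiv.Perm (Fin n))
    (hi0 : 0 < i) (hin : i < n)
    (hcut : ∀ a : Fin n, a.val < i ↔ (π a).val < i)
    (hmin : ∀ j : ℕ, 0 < j → j < i → ¬ ∀ a : Fin n, a.val < j ↔ (π a).val < j) :
    (¬ ∃ a b c d : Fin n, a < b ∧ b < c ∧ c < d ∧
        π b < π c ∧ π c < π a ∧ π a < π d) ↔
    ((¬ ∃ a b c : Fin n, a < b ∧ b < c ∧ c.val < i ∧ π b < π c ∧ π c < π a) ∧
      ¬ ∃ a b c d : Fin n, i ≤ a.val ∧ a < b ∧ b < c ∧ c < d ∧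
        π b < π c ∧ π c < π a ∧ π a < π d) :=
  stmt6_general n i π hin hcut
end

section
/- Let π be a decomposable permutation of {1,...,n} with first component π^(1) = π(1)⋯π(i), i = i_π < n. Then π avoids the pattern 2143 if and only if either (a) i = 1 (so π(1)=1) and π(2)⋯π(n) avoids 2143, or (b) 2 ≤ i ≤ n−1, π^(1) avoids 2143, and π(i+1)⋯π(n) is the increasing sequence (i+1)(i+2)⋯n. -/
/-!
Since the first component has length `i ≥ 2` it is indecomposable, so `π(1) ≠ 1` and the position
`b` of the value `1` gives a descent `π(b) < π(1)` inside the first component. All values of the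
first component lie below all values of the suffix, so this descent followed by any descent of the
suffix is a `2143`; an avoiding `π` is therefore increasing on the suffix, and an increasing
permutation of `{i+1, …, n}` is the identity. Conversely, a fixed suffix, or a fixed point `π(1) = 1`,
cannot host the relevant letters of a `2143`.
-/

open Equiv

theorem Set.MapsTo.le_apply_of_strictMonoOn {α : Type*} [LinearOrder α] [WellFoundedLT α]
    {f : α → α} {s : Set α} (hmaps : Set.MapsTo f s s) (hmono : StrictMonoOn f s) :
    ∀ x ∈ s, x ≤ f x := by
  intro x
  induction x using WellFoundedLT.induction with
  | _ x ih =>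
    intro hx
    by_contra! hlt
    exact (hmono (hmaps hx) hx hlt).not_ge (ih (f x) hlt (hmaps hx))

theorem Equiv.Perm.apply_eq_self_of_strictMonoOn {α : Type*} [LinearOrder α] [WellFoundedLT α]
    (σ : Perm α) {s : Set α} (hs : ∀ x, σ x ∈ s ↔ x ∈ s) (hmono : StrictMonoOn σ s) :
    ∀ x ∈ s, σ x = x := by
  have hmaps : Set.MapsTo σ s s := fun x hx => (hs x).2 hx
  have hmaps_symm : Set.MapsTo σ.symm s s := fun x hx => (hs _).1 (by simpa using hx)
  have hmono_symm : StrictMonoOn σ.symm s := fun x hx y hy hxy => by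
    rw [← hmono.lt_iff_lt (hmaps_symm hx) (hmaps_symm hy)]
    simpa using hxy
  intro x hx
  refine le_antisymm ?_ (hmaps.le_apply_of_strictMonoOn hmono x hx)
  simpa using hmaps_symm.le_apply_of_strictMonoOn hmono_symm (σ x) (hmaps hx)

section Decomposable

variable {n i : ℕ} {π : Perm (Fin n)}

theorem exists_descent_of_indecomposable (h2 : 2 ≤ i) (hin : i < n)
    (hcut : ∀ a : Fin n, a.val < i ↔ (π a).val < i)
    (hmin : ∀ j : ℕ, 0 < j → j < i → ¬ ∀ a : Fin n, a.val < j ↔ (π a).val < j) :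
    ∃ a b : Fin n, a < b ∧ b.val < i ∧ π b < π a := by
  let z : Fin n := ⟨0, by omega⟩
  have hz : z.val = 0 := rfl
  have hval_lt_one (a : Fin n) : a.val < 1 ↔ a = z := by rw [Fin.ext_iff]; omega
  have hπz : π z ≠ z := fun hfix => hmin 1 one_pos (by omega) fun a => by
    rw [hval_lt_one, hval_lt_one, ← π.injective.eq_iff, hfix]
  have hb : π (π.symm z) = z := π.apply_symm_apply z
  have hb_ne : π.symm z ≠ z := fun h => hπz (by rwa [h] at hb)
  refine ⟨z, π.symm z, ?_, ?_, ?_⟩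
  · rw [Fin.lt_def]; rw [Ne, Fin.ext_iff] at hb_ne; omega
  · exact (hcut _).2 (by rw [hb]; omega)
  · rw [hb, Fin.lt_def]; rw [Ne, Fin.ext_iff] at hπz; omega

theorem strictMonoOn_suffix_of_not_contains_2143
    (hcut : ∀ a : Fin n, a.val < i ↔ (π a).val < i)
    (hdesc : ∃ a b : Fin n, a < b ∧ b.val < i ∧ π b < π a)
    (hav : ¬ ∃ a b c d : Fin n, a < b ∧ b < c ∧ c < d ∧
        π b < π a ∧ π a < π d ∧ π d < π c) :
    StrictMonoOn π {x | i ≤ x.val} := by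
  obtain ⟨a, b, hab, hbi, hba⟩ := hdesc
  intro c (hc : i ≤ c.val) d (hd : i ≤ d.val) hcd
  refine lt_of_not_ge fun hdc => hav
    ⟨a, b, c, d, hab, ?_, hcd, hba, ?_, hdc.lt_of_ne (π.injective.ne hcd.ne')⟩
  · rw [Fin.lt_def]; omega
  · have hπa : (π a).val < i := (hcut a).1 (by rw [Fin.lt_def] at hab; omega)
    have hπd : ¬ (π d).val < i := (hcut d).not.1 (by omega)
    rw [Fin.lt_def]; omega

theorem apply_lt_apply_of_fixed_suffix
    (hcut : ∀ a : Fin n, a.val < i ↔ (π a).val < i)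
    (hfix : ∀ a : Fin n, i ≤ a.val → π a = a) {c d : Fin n} (hcd : c < d) (hd : i ≤ d.val) :
    π c < π d := by
  rw [hfix d hd]
  by_cases hc : i ≤ c.val
  · rwa [hfix c hc]
  · have := (hcut c).1 (by omega)
    rw [Fin.lt_def]; omega

end Decomposable

/-- A decomposable permutation with first component of length i avoids
2143 iff either (a) i = 1 and the suffix avoids 2143, or (b) 2 ≤ i ≤ n-1, the first
component avoids 2143, and the suffix is the increasing sequence (i+1)⋯n. -/
theorem stmt8 (n i : ℕ) (π : Equiv.Perm (Fin n))
    (hi0 : 0 < i) (hin : i < n)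
    (hcut : ∀ a : Fin n, a.val < i ↔ (π a).val < i)
    (hmin : ∀ j : ℕ, 0 < j → j < i → ¬ ∀ a : Fin n, a.val < j ↔ (π a).val < j) :
    (¬ ∃ a b c d : Fin n, a < b ∧ b < c ∧ c < d ∧
        π b < π a ∧ π a < π d ∧ π d < π c) ↔
    ((i = 1 ∧ ¬ ∃ a b c d : Fin n, 1 ≤ a.val ∧ a < b ∧ b < c ∧ c < d ∧
        π b < π a ∧ π a < π d ∧ π d < π c) ∨
     (2 ≤ i ∧ i ≤ n - 1 ∧
        (¬ ∃ a b c d : Fin n, a < b ∧ b < c ∧ c < d ∧ d.val < i ∧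
          π b < π a ∧ π a < π d ∧ π d < π c) ∧
        ∀ a : Fin n, i ≤ a.val → π a = a)) := by
  constructor
  · intro hav
    rcases lt_or_ge i 2 with h1 | h2
    · exact .inl ⟨by omega, fun ⟨a, b, c, d, _, h⟩ => hav ⟨a, b, c, d, h⟩⟩
    · refine .inr ⟨h2, by omega,
        fun ⟨a, b, c, d, hab, hbc, hcd, _, h⟩ => hav ⟨a, b, c, d, hab, hbc, hcd, h⟩, ?_⟩
      have hmono := strictMonoOn_suffix_of_not_contains_2143 hcut
        (exists_descent_of_indecomposable h2 hin hcut hmin) hav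
      have hsuffix (x : Fin n) : i ≤ (π x).val ↔ i ≤ x.val := by simpa using (hcut x).symm.not
      exact π.apply_eq_self_of_strictMonoOn hsuffix hmono
  · rintro (⟨rfl, hav⟩ | ⟨_, _, hav, hfix⟩) ⟨a, b, c, d, hab, hbc, hcd, hba, had, hdc⟩
    · refine hav ⟨a, b, c, d, ?_, hab, hbc, hcd, hba, had, hdc⟩
      by_contra! ha
      have := (hcut a).1 ha
      rw [Fin.lt_def] at hba; omega
    · refine hav ⟨a, b, c, d, hab, hbc, hcd, ?_, hba, had, hdc⟩
      by_contra! hd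
      exact hdc.not_gt (apply_lt_apply_of_fixed_suffix hcut hfix hcd hd)
end

section
/- Let π be a decomposable permutation of {1,...,n} with first component π^(1) = π(1)⋯π(i), i = i_π < n. Then π avoids the pattern 2134 if and only if either (a) i = 1 and π(2)⋯π(n) avoids 2134, or (b) 2 ≤ i ≤ n−1, π^(1) avoids the pattern 213, and π(i+1)⋯π(n) is the decreasing sequence n(n−1)⋯(i+1). -/
/-!
Every value of the first component lies below every value of the tail. If `i ≥ 2`,
minimality of the first component forces `π 0 ≠ 0`, which gives an inversion inside the first
component; followed by any ascent of the tail it would form a `2134`, so the tail is strictly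
decreasing, and as a permutation of `{i, …, n-1}` it is the reversal. Appending the value
`n - 1` turns a `213` of the first component into a `2134`. Conversely, when the tail is
decreasing the `3` and `4` of a `2134` cannot both lie in it, so its `213` lies in the first
component. For `i = 1` the first entry is the fixed point `0`, which cannot play the `2`.
-/

theorem exists_lt_apply_lt_of_isBot {α : Type*} [LinearOrder α] (π : Equiv.Perm α) {z : α}
    (hz : IsBot z) (hπz : π z ≠ z) : ∃ q, z < q ∧ π q < π z := by
  refine ⟨π.symm z, lt_of_le_of_ne (hz _) fun h => hπz ?_, ?_⟩
  · simpa [← h] using π.apply_symm_apply z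
  · rw [Equiv.apply_symm_apply]
    exact lt_of_le_of_ne (hz _) hπz.symm

namespace Fin

variable {n : ℕ}

theorem perm_val_lt_one_iff_of_apply_zero (π : Equiv.Perm (Fin n)) (hn : 0 < n)
    (h : π ⟨0, hn⟩ = ⟨0, hn⟩) (a : Fin n) : a.val < 1 ↔ (π a).val < 1 := by
  have key : ∀ b : Fin n, b.val < 1 ↔ b = ⟨0, hn⟩ := fun b => by
    simp [Fin.ext_iff]
  rw [key, key]
  exact ⟨fun ha => ha ▸ h, fun ha => π.injective (ha.trans h.symm)⟩

theorem one_le_val_of_apply_lt (π : Equiv.Perm (Fin n))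
    (hcut : ∀ a : Fin n, a.val < 1 ↔ (π a).val < 1) {a b : Fin n} (hba : π b < π a) :
    1 ≤ a.val := by
  by_contra! ha
  have := (hcut a).mp ha
  have := Fin.lt_def.mp hba
  omega

theorem val_add_le_of_strictAntiOn {f : Fin n → ℕ} {a b : Fin n} (hab : a ≤ b)
    (hf : StrictAntiOn f (Set.Icc a b)) : f b + (b.val - a.val) ≤ f a := by
  suffices ∀ m (b : Fin n), a.val + m = b.val → StrictAntiOn f (Set.Icc a b) → f b + m ≤ f a by
    exact this _ b (by have := Fin.le_def.mp hab; omega) hf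
  intro m
  induction m with
  | zero => intro b hb _; simp [Fin.ext (by omega : a.val = b.val)]
  | succ m ih =>
    intro b hb hf
    let c : Fin n := ⟨a.val + m, by omega⟩
    have hcb : c < b := Fin.lt_def.mpr (by simp [c]; omega)
    have hsub : Set.Icc a c ⊆ Set.Icc a b := Set.Icc_subset_Icc_right hcb.le
    have hc := ih c rfl (hf.mono hsub)
    have hlt := hf ⟨Fin.le_def.mpr (by simp [c]), hcb.le⟩ ⟨Fin.le_def.mpr (by omega), le_rfl⟩ hcb
    omega

theorem val_apply_eq_of_strictAntiOn_Ici (f : Fin n → Fin n) {i : ℕ} (hin : i < n)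
    (hanti : StrictAntiOn f {a | i ≤ a.val}) (hmaps : ∀ a : Fin n, i ≤ a.val → i ≤ (f a).val)
    (a : Fin n) (ha : i ≤ a.val) : (f a).val = n - 1 - (a.val - i) := by
  let first : Fin n := ⟨i, hin⟩
  let last : Fin n := ⟨n - 1, by omega⟩
  have hval : StrictAntiOn (fun b => (f b).val) {b : Fin n | i ≤ b.val} :=
    fun x hx y hy hxy => Fin.lt_def.mp (hanti hx hy hxy)
  have hsub : ∀ b c : Fin n, i ≤ b.val → Set.Icc b c ⊆ {x : Fin n | i ≤ x.val} :=
    fun b c hb x hx => le_trans hb (Fin.le_def.mp hx.1)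
  have upper := val_add_le_of_strictAntiOn (f := fun b => (f b).val)
    (Fin.le_def.mpr ha : first ≤ a) (hval.mono (hsub first a le_rfl))
  have lower := val_add_le_of_strictAntiOn (f := fun b => (f b).val)
    (Fin.le_def.mpr (by simp [last]; omega) : a ≤ last) (hval.mono (hsub a last ha))
  have := (f first).isLt
  have := hmaps last (by simp [last]; omega)
  simp only [first, last] at upper lower this
  omega

end Fin

section Decomposable

variable {n i : ℕ} {π : Equiv.Perm (Fin n)}

theorem exists_inversion_of_not_fixes_zero (hn : 0 < n)
    (hcut : ∀ a : Fin n, a.val < i ↔ (π a).val < i)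
    (hmin : ¬ ∀ a : Fin n, a.val < 1 ↔ (π a).val < 1) (hi : 1 ≤ i) :
    ∃ p q : Fin n, p < q ∧ q.val < i ∧ π q < π p := by
  have hbot : IsBot (⟨0, hn⟩ : Fin n) := fun a => Fin.le_def.mpr (Nat.zero_le _)
  have hπ0 : π ⟨0, hn⟩ ≠ ⟨0, hn⟩ := fun h => hmin (Fin.perm_val_lt_one_iff_of_apply_zero π hn h)
  obtain ⟨q, hq, hinv⟩ := exists_lt_apply_lt_of_isBot π hbot hπ0
  refine ⟨_, q, hq, (hcut q).mpr ?_, hinv⟩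
  have := (hcut ⟨0, hn⟩).mp hi
  have := Fin.lt_def.mp hinv
  omega

theorem strictAntiOn_of_inversion_of_not_contains_2134
    (hcut : ∀ a : Fin n, a.val < i ↔ (π a).val < i)
    {p q : Fin n} (hpq : p < q) (hqi : q.val < i) (hinv : π q < π p)
    (havoid : ¬ ∃ a b c d : Fin n, a < b ∧ b < c ∧ c < d ∧
        π b < π a ∧ π a < π c ∧ π c < π d) :
    StrictAntiOn π {a | i ≤ a.val} := by
  intro a ha b _ hab
  refine lt_of_le_of_ne (not_lt.mp fun hlt => havoid ⟨p, q, a, b, hpq, ?_, hab, hinv, ?_, hlt⟩)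
    (π.injective.ne hab.ne')
  · exact Fin.lt_def.mpr (lt_of_lt_of_le hqi ha)
  · have := (hcut p).mp (lt_trans (Fin.lt_def.mp hpq) hqi)
    have := mt (hcut a).mpr (not_lt.mpr ha)
    exact Fin.lt_def.mpr (by omega)

theorem not_contains_213_of_not_contains_2134 (hin : i < n)
    (hcut : ∀ a : Fin n, a.val < i ↔ (π a).val < i)
    (havoid : ¬ ∃ a b c d : Fin n, a < b ∧ b < c ∧ c < d ∧
        π b < π a ∧ π a < π c ∧ π c < π d) :
    ¬ ∃ a b c : Fin n, a < b ∧ b < c ∧ c.val < i ∧ π b < π a ∧ π a < π c := by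
  rintro ⟨a, b, c, hab, hbc, hci, hba, hac⟩
  let top : Fin n := ⟨n - 1, by omega⟩
  have hd : ¬ (π.symm top).val < i := fun h => by
    have := (hcut _).mp h
    simp only [Equiv.apply_symm_apply, top] at this
    omega
  refine havoid ⟨a, b, c, π.symm top, hab, hbc, Fin.lt_def.mpr (by omega), hba, hac, ?_⟩
  have := (hcut c).mp hci
  rw [Equiv.apply_symm_apply]
  exact Fin.lt_def.mpr (by simp only [top]; omega)

theorem not_contains_2134_of_not_contains_213_of_reversed_suffix
    (h213 : ¬ ∃ a b c : Fin n, a < b ∧ b < c ∧ c.val < i ∧ π b < π a ∧ π a < π c)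
    (hsuf : ∀ a : Fin n, i ≤ a.val → (π a).val = n - 1 - (a.val - i)) :
    ¬ ∃ a b c d : Fin n, a < b ∧ b < c ∧ c < d ∧
        π b < π a ∧ π a < π c ∧ π c < π d := by
  rintro ⟨a, b, c, d, hab, hbc, hcd, hba, hac, hcd'⟩
  by_cases hci : c.val < i
  · exact h213 ⟨a, b, c, hab, hbc, hci, hba, hac⟩
  · have hc := hsuf c (by omega)
    have hd := hsuf d (by have := Fin.lt_def.mp hcd; omega)
    have := Fin.lt_def.mp hcd
    have := Fin.lt_def.mp hcd'
    have := d.isLt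
    omega

end Decomposable

/-- A decomposable permutation with first component of length i avoids
2134 iff either (a) i = 1 and the suffix avoids 2134, or (b) 2 ≤ i ≤ n-1, the first
component avoids 213, and the suffix is the decreasing sequence n(n-1)⋯(i+1). -/
theorem stmt9 (n i : ℕ) (π : Equiv.Perm (Fin n))
    (hi0 : 0 < i) (hin : i < n)
    (hcut : ∀ a : Fin n, a.val < i ↔ (π a).val < i)
    (hmin : ∀ j : ℕ, 0 < j → j < i → ¬ ∀ a : Fin n, a.val < j ↔ (π a).val < j) :
    (¬ ∃ a b c d : Fin n, a < b ∧ b < c ∧ c < d ∧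
        π b < π a ∧ π a < π c ∧ π c < π d) ↔
    ((i = 1 ∧ ¬ ∃ a b c d : Fin n, 1 ≤ a.val ∧ a < b ∧ b < c ∧ c < d ∧
        π b < π a ∧ π a < π c ∧ π c < π d) ∨
     (2 ≤ i ∧ i ≤ n - 1 ∧
        (¬ ∃ a b c : Fin n, a < b ∧ b < c ∧ c.val < i ∧ π b < π a ∧ π a < π c) ∧
        ∀ a : Fin n, i ≤ a.val → (π a).val = n - 1 - (a.val - i))) := by
  constructor
  · intro havoid
    rcases (by omega : i = 1 ∨ 2 ≤ i) with rfl | hi2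
    · exact Or.inl ⟨rfl, fun ⟨a, b, c, d, _, h⟩ => havoid ⟨a, b, c, d, h⟩⟩
    obtain ⟨p, q, hpq, hqi, hinv⟩ :=
      exists_inversion_of_not_fixes_zero (by omega) hcut (hmin 1 one_pos hi2) hi0
    have hanti := strictAntiOn_of_inversion_of_not_contains_2134 hcut hpq hqi hinv havoid
    have hmaps : ∀ a : Fin n, i ≤ a.val → i ≤ (π a).val :=
      fun a ha => not_lt.mp (mt (hcut a).mpr (not_lt.mpr ha))
    exact Or.inr ⟨hi2, by omega, not_contains_213_of_not_contains_2134 hin hcut havoid,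
      Fin.val_apply_eq_of_strictAntiOn_Ici π hin hanti hmaps⟩
  · rintro (⟨rfl, havoid⟩ | ⟨_, _, h213, hsuf⟩)
    · exact fun ⟨a, b, c, d, hab, hbc, hcd, hba, h⟩ =>
        havoid ⟨a, b, c, d, Fin.one_le_val_of_apply_lt π hcut hba, hab, hbc, hcd, hba, h⟩
    · exact not_contains_2134_of_not_contains_213_of_reversed_suffix h213 hsuf
end

section
/- Let π be a decomposable permutation of {1,...,n} with first component π^(1) = π(1)⋯π(i), i = i_π < n. Then π avoids the pattern 1324 if and only if π^(1) avoids the pattern 132 and the suffix π(i+1)⋯π(n) avoids the pattern 213. -/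
/-!
Cutting π after position `i` splits it into a direct sum: every entry of the first block is
smaller than every entry of the second. In an occurrence `abcd` of 1324, if `b` lies in the
first block then so does `c` (its value is smaller), and `abc` is a 132 there; otherwise `bcd`
is a 213 in the second block. Conversely a 132 in the first block becomes a 1324 by appending
the entry at position `i`, and a 213 in the second block by prepending the entry at position 0.
-/

namespace Equiv.Perm

variable {n i : ℕ} {π : Equiv.Perm (Fin n)}

lemma apply_lt_apply_of_lt_cut_le (hcut : ∀ a : Fin n, a.val < i ↔ (π a).val < i)
    {a b : Fin n} (ha : a.val < i) (hb : i ≤ b.val) : π a < π b :=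
  Fin.lt_def.mpr <| lt_of_lt_of_le ((hcut a).mp ha) <| not_lt.mp fun h => hb.not_gt ((hcut b).mpr h)

lemma exists_1324_of_exists_132_lt_cut (hin : i < n)
    (hcut : ∀ a : Fin n, a.val < i ↔ (π a).val < i)
    (h132 : ∃ a b c : Fin n, a < b ∧ b < c ∧ c.val < i ∧ π a < π c ∧ π c < π b) :
    ∃ a b c d : Fin n, a < b ∧ b < c ∧ c < d ∧ π a < π c ∧ π c < π b ∧ π b < π d := by
  obtain ⟨a, b, c, hab, hbc, hci, hac, hcb⟩ := h132
  have hbi : b.val < i := (Fin.lt_def.mp hbc).trans hci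
  exact ⟨a, b, c, ⟨i, hin⟩, hab, hbc, Fin.lt_def.mpr hci, hac, hcb,
    apply_lt_apply_of_lt_cut_le hcut hbi le_rfl⟩

lemma exists_1324_of_exists_213_cut_le (hi0 : 0 < i)
    (hcut : ∀ a : Fin n, a.val < i ↔ (π a).val < i)
    (h213 : ∃ a b c : Fin n, i ≤ a.val ∧ a < b ∧ b < c ∧ π b < π a ∧ π a < π c) :
    ∃ a b c d : Fin n, a < b ∧ b < c ∧ c < d ∧ π a < π c ∧ π c < π b ∧ π b < π d := by
  obtain ⟨a, b, c, hia, hab, hbc, hba, hac⟩ := h213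
  have h0n : 0 < n := hi0.trans_le (hia.trans a.is_lt.le)
  have hib : i ≤ b.val := hia.trans (Fin.lt_def.mp hab).le
  exact ⟨⟨0, h0n⟩, a, b, c, Fin.lt_def.mpr (hi0.trans_le hia), hab, hbc,
    apply_lt_apply_of_lt_cut_le hcut hi0 hib, hba, hac⟩

lemma exists_132_lt_cut_or_exists_213_cut_le
    (hcut : ∀ a : Fin n, a.val < i ↔ (π a).val < i)
    (h1324 : ∃ a b c d : Fin n, a < b ∧ b < c ∧ c < d ∧
      π a < π c ∧ π c < π b ∧ π b < π d) :
    (∃ a b c : Fin n, a < b ∧ b < c ∧ c.val < i ∧ π a < π c ∧ π c < π b) ∨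
      ∃ a b c : Fin n, i ≤ a.val ∧ a < b ∧ b < c ∧ π b < π a ∧ π a < π c := by
  obtain ⟨a, b, c, d, hab, hbc, hcd, hac, hcb, hbd⟩ := h1324
  by_cases hbi : b.val < i
  · have hci : c.val < i := (hcut c).mpr <| (Fin.lt_def.mp hcb).trans ((hcut b).mp hbi)
    exact Or.inl ⟨a, b, c, hab, hbc, hci, hac, hcb⟩
  · exact Or.inr ⟨b, c, d, not_lt.mp hbi, hbc, hcd, hcb, hbd⟩

end Equiv.Perm

theorem stmt10_general (n i : ℕ) (π : Equiv.Perm (Fin n))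
    (hi0 : 0 < i) (hin : i < n)
    (hcut : ∀ a : Fin n, a.val < i ↔ (π a).val < i) :
    (¬ ∃ a b c d : Fin n, a < b ∧ b < c ∧ c < d ∧
        π a < π c ∧ π c < π b ∧ π b < π d) ↔
    ((¬ ∃ a b c : Fin n, a < b ∧ b < c ∧ c.val < i ∧ π a < π c ∧ π c < π b) ∧
      ¬ ∃ a b c : Fin n, i ≤ a.val ∧ a < b ∧ b < c ∧ π b < π a ∧ π a < π c) := by
  constructor
  · intro h1324
    exact ⟨fun h132 => h1324 (Equiv.Perm.exists_1324_of_exists_132_lt_cut hin hcut h132),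
      fun h213 => h1324 (Equiv.Perm.exists_1324_of_exists_213_cut_le hi0 hcut h213)⟩
  · rintro ⟨h132, h213⟩ h1324
    exact (Equiv.Perm.exists_132_lt_cut_or_exists_213_cut_le hcut h1324).elim h132 h213

/-- A decomposable permutation with first component of length i avoids
1324 iff the first component avoids 132 and the suffix avoids 213. -/
theorem stmt10 (n i : ℕ) (π : Equiv.Perm (Fin n))
    (hi0 : 0 < i) (hin : i < n)
    (hcut : ∀ a : Fin n, a.val < i ↔ (π a).val < i)
    (hmin : ∀ j : ℕ, 0 < j → j < i → ¬ ∀ a : Fin n, a.val < j ↔ (π a).val < j) :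
    (¬ ∃ a b c d : Fin n, a < b ∧ b < c ∧ c < d ∧
        π a < π c ∧ π c < π b ∧ π b < π d) ↔
    ((¬ ∃ a b c : Fin n, a < b ∧ b < c ∧ c.val < i ∧ π a < π c ∧ π c < π b) ∧
      ¬ ∃ a b c : Fin n, i ≤ a.val ∧ a < b ∧ b < c ∧ π b < π a ∧ π a < π c) :=
  stmt10_general n i π hi0 hin hcut
end

section
/- Let π be a decomposable permutation of {1,...,n} with first component π^(1) = π(1)⋯π(i), i = i_π < n. Then π avoids the pattern 1234 if and only if either (a) π^(1) is the decreasing sequence i(i−1)⋯1 and π(i+1)⋯π(n) avoids 123, or (b) π^(1) is not the decreasing sequence, π^(1) avoids 123, 3 ≤ i ≤ n−1, and π(i+1)⋯π(n) is the decreasing sequence n(n−1)⋯(i+1). -/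
/-!
If the first component is the reversal `i ⋯ 1`, a `1234` uses at most one of its entries, and
that entry can only be the `1`; so `π` avoids `1234` iff the second component avoids `123`.
Otherwise the first component has an ascent, which together with any ascent of the second
component gives a `1234`; hence the second component is decreasing, so it is the reversal
`n ⋯ (i+1)`, and a `1234` must consist of a `123` of the first component followed by one entry
of the second. An ascent of the first component also forces `i ≥ 3`, since for `i = 2` it
would make `π(1) = 1` a component of its own.
-/

open Set

section StrictAnti

variable {n lo hi : ℕ} {f : Fin n → ℕ}

lemma add_sub_le_of_strictAntiOn (hanti : StrictAntiOn f (Fin.val ⁻¹' Ico lo hi))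
    {a b : Fin n} (ha : lo ≤ a.val) (hab : a ≤ b) (hb : b.val < hi) :
    f b + (b.val - a.val) ≤ f a := by
  obtain ⟨k, hk⟩ : ∃ k, b.val = a.val + k := ⟨b.val - a.val, by omega⟩
  induction k generalizing b with
  | zero => rw [show b = a from Fin.ext (by omega)]; omega
  | succ k ih =>
    let c : Fin n := ⟨a.val + k, by omega⟩
    have hfc : f c + k ≤ f a := by
      simpa [c] using ih (b := c) (Fin.le_def.2 (by simp [c])) (by simp [c]; omega) rfl
    have hfb : f b < f c :=
      hanti (by simp [c]; omega) (by simp; omega) (Fin.lt_def.2 (by simp [c]; omega))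
    omega

lemma eq_rev_of_strictAntiOn (hhi : hi ≤ n) (hanti : StrictAntiOn f (Fin.val ⁻¹' Ico lo hi))
    (hmaps : MapsTo f (Fin.val ⁻¹' Ico lo hi) (Ico lo hi))
    {a : Fin n} (ha : lo ≤ a.val) (hah : a.val < hi) : f a = hi - 1 - (a.val - lo) := by
  let first : Fin n := ⟨lo, by omega⟩
  let last : Fin n := ⟨hi - 1, by omega⟩
  have h₁ : f last + (hi - 1 - a.val) ≤ f a :=
    add_sub_le_of_strictAntiOn hanti ha (Fin.le_def.2 (by simp [last]; omega))
      (by simp [last]; omega)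
  have h₂ : f a + (a.val - lo) ≤ f first :=
    add_sub_le_of_strictAntiOn hanti (a := first) le_rfl (Fin.le_def.2 (by simp [first]; omega)) hah
  have h₃ := hmaps (show last ∈ Fin.val ⁻¹' Ico lo hi by simp [last]; omega)
  have h₄ := hmaps (show first ∈ Fin.val ⁻¹' Ico lo hi by simp [first]; omega)
  simp only [mem_Ico] at h₃ h₄
  omega

end StrictAnti

section Decomposable

variable {n i : ℕ} {π : Equiv.Perm (Fin n)}

lemma le_val_apply_of_cut (hcut : ∀ a : Fin n, a.val < i ↔ (π a).val < i) {a : Fin n}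
    (ha : i ≤ a.val) : i ≤ (π a).val :=
  not_lt.1 fun h => absurd ((hcut a).2 h) (by omega)

lemma not_exists_123_suffix_of_avoids_1234 (hcut : ∀ a : Fin n, a.val < i ↔ (π a).val < i)
    (hi0 : 0 < i)
    (H : ¬ ∃ a b c d : Fin n, a < b ∧ b < c ∧ c < d ∧
      π a < π b ∧ π b < π c ∧ π c < π d) :
    ¬ ∃ a b c : Fin n, i ≤ a.val ∧ a < b ∧ b < c ∧ π a < π b ∧ π b < π c := by
  rintro ⟨a, b, c, hia, hab, hbc, h₁, h₂⟩
  have h₀ := (hcut ⟨0, a.pos⟩).1 hi0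
  have := le_val_apply_of_cut hcut hia
  exact H ⟨⟨0, a.pos⟩, a, b, c, Fin.lt_def.2 (by simp; omega), hab, hbc,
    Fin.lt_def.2 (by omega), h₁, h₂⟩

lemma not_exists_123_prefix_of_avoids_1234 (hcut : ∀ a : Fin n, a.val < i ↔ (π a).val < i)
    (hin : i < n)
    (H : ¬ ∃ a b c d : Fin n, a < b ∧ b < c ∧ c < d ∧
      π a < π b ∧ π b < π c ∧ π c < π d) :
    ¬ ∃ a b c : Fin n, a < b ∧ b < c ∧ c.val < i ∧ π a < π b ∧ π b < π c := by
  rintro ⟨a, b, c, hab, hbc, hci, h₁, h₂⟩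
  let last : Fin n := ⟨n - 1, by omega⟩
  have := (hcut c).1 hci
  have := le_val_apply_of_cut hcut (a := last) (by simp [last]; omega)
  exact H ⟨a, b, c, last, hab, hbc, Fin.lt_def.2 (by simp [last]; omega), h₁, h₂,
    Fin.lt_def.2 (by omega)⟩

lemma exists_ascent_prefix_of_ne_rev (hcut : ∀ a : Fin n, a.val < i ↔ (π a).val < i)
    (hin : i ≤ n) (hrev : ¬ ∀ a : Fin n, a.val < i → (π a).val = i - 1 - a.val) :
    ∃ a b : Fin n, a < b ∧ b.val < i ∧ π a < π b := by
  by_contra! hdesc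
  refine hrev fun a ha => ?_
  have hanti : StrictAntiOn (fun a => (π a).val) (Fin.val ⁻¹' Ico 0 i) := fun a _ b hb hab =>
    lt_of_le_of_ne (hdesc a b hab hb.2) (fun h => hab.ne (π.injective (Fin.ext h)).symm)
  simpa using eq_rev_of_strictAntiOn hin hanti (fun a ha => ⟨Nat.zero_le _, (hcut a).1 ha.2⟩)
    (Nat.zero_le _) ha

lemma three_le_of_ascent_prefix (hcut : ∀ a : Fin n, a.val < i ↔ (π a).val < i)
    (hmin : ∀ j : ℕ, 0 < j → j < i → ¬ ∀ a : Fin n, a.val < j ↔ (π a).val < j)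
    {a b : Fin n} (hab : a < b) (hbi : b.val < i) (hπ : π a < π b) : 3 ≤ i := by
  by_contra! hi
  rw [Fin.lt_def] at hab hπ
  have := (hcut a).1 (by omega)
  have := (hcut b).1 hbi
  have hπa : (π a).val = 0 := by omega
  refine hmin 1 one_pos (by omega) fun c => ⟨fun hc => ?_, fun hc => ?_⟩
  · rw [show c = a from Fin.ext (by omega), hπa]; exact one_pos
  · have : c = a := π.injective (Fin.ext (by omega))
    omega

lemma suffix_eq_rev_of_ascent_prefix (hcut : ∀ a : Fin n, a.val < i ↔ (π a).val < i)
    (H : ¬ ∃ a b c d : Fin n, a < b ∧ b < c ∧ c < d ∧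
      π a < π b ∧ π b < π c ∧ π c < π d)
    {a₀ b₀ : Fin n} (hab₀ : a₀ < b₀) (hb₀i : b₀.val < i) (hπ₀ : π a₀ < π b₀) :
    ∀ a : Fin n, i ≤ a.val → (π a).val = n - 1 - (a.val - i) := by
  have hanti : StrictAntiOn (fun a => (π a).val) (Fin.val ⁻¹' Ico i n) := by
    intro c hc d _ hcd
    refine lt_of_le_of_ne
      (not_lt.1 fun hlt => H ⟨a₀, b₀, c, d, hab₀, ?_, hcd, hπ₀, ?_, hlt⟩)
      (fun h => hcd.ne (π.injective (Fin.ext h)).symm)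
    · exact Fin.lt_def.2 (by simp only [mem_preimage, mem_Ico] at hc; omega)
    · have := (hcut b₀).1 hb₀i
      have := le_val_apply_of_cut hcut hc.1
      exact Fin.lt_def.2 (by omega)
  exact fun a ha => eq_rev_of_strictAntiOn le_rfl hanti
    (fun c hc => ⟨le_val_apply_of_cut hcut hc.1, (π c).isLt⟩) ha a.isLt

lemma avoids_1234_of_prefix_eq_rev (hrev : ∀ a : Fin n, a.val < i → (π a).val = i - 1 - a.val)
    (hno : ¬ ∃ a b c : Fin n, i ≤ a.val ∧ a < b ∧ b < c ∧ π a < π b ∧ π b < π c) :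
    ¬ ∃ a b c d : Fin n, a < b ∧ b < c ∧ c < d ∧
      π a < π b ∧ π b < π c ∧ π c < π d := by
  rintro ⟨a, b, c, d, hab, hbc, hcd, h₁, h₂, h₃⟩
  refine hno ⟨b, c, d, not_lt.1 fun hbi => ?_, hbc, hcd, h₂, h₃⟩
  rw [Fin.lt_def] at hab h₁
  have := hrev a (by omega)
  have := hrev b hbi
  omega

lemma avoids_1234_of_suffix_eq_rev
    (hrev : ∀ a : Fin n, i ≤ a.val → (π a).val = n - 1 - (a.val - i))
    (hno : ¬ ∃ a b c : Fin n, a < b ∧ b < c ∧ c.val < i ∧ π a < π b ∧ π b < π c) :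
    ¬ ∃ a b c d : Fin n, a < b ∧ b < c ∧ c < d ∧
      π a < π b ∧ π b < π c ∧ π c < π d := by
  rintro ⟨a, b, c, d, hab, hbc, hcd, h₁, h₂, h₃⟩
  refine hno ⟨a, b, c, hab, hbc, not_le.1 fun hci => ?_, h₁, h₂⟩
  rw [Fin.lt_def] at hcd h₃
  have := hrev c hci
  have := hrev d (by omega)
  omega

end Decomposable

/-- A decomposable permutation with first component of length i avoids
1234 iff either (a) the first component is the decreasing sequence i(i-1)⋯1 and the
suffix avoids 123, or (b) the first component is not decreasing, avoids 123,
3 ≤ i ≤ n-1, and the suffix is the decreasing sequence n(n-1)⋯(i+1). -/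
theorem stmt11 (n i : ℕ) (π : Equiv.Perm (Fin n))
    (hi0 : 0 < i) (hin : i < n)
    (hcut : ∀ a : Fin n, a.val < i ↔ (π a).val < i)
    (hmin : ∀ j : ℕ, 0 < j → j < i → ¬ ∀ a : Fin n, a.val < j ↔ (π a).val < j) :
    (¬ ∃ a b c d : Fin n, a < b ∧ b < c ∧ c < d ∧
        π a < π b ∧ π b < π c ∧ π c < π d) ↔
    (((∀ a : Fin n, a.val < i → (π a).val = i - 1 - a.val) ∧
        ¬ ∃ a b c : Fin n, i ≤ a.val ∧ a < b ∧ b < c ∧ π a < π b ∧ π b < π c) ∨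
     ((¬ ∀ a : Fin n, a.val < i → (π a).val = i - 1 - a.val) ∧
        (¬ ∃ a b c : Fin n, a < b ∧ b < c ∧ c.val < i ∧ π a < π b ∧ π b < π c) ∧
        3 ≤ i ∧ i ≤ n - 1 ∧
        ∀ a : Fin n, i ≤ a.val → (π a).val = n - 1 - (a.val - i))) := by
  constructor
  · intro H
    by_cases hrev : ∀ a : Fin n, a.val < i → (π a).val = i - 1 - a.val
    · exact .inl ⟨hrev, not_exists_123_suffix_of_avoids_1234 hcut hi0 H⟩
    · obtain ⟨a, b, hab, hbi, hπ⟩ := exists_ascent_prefix_of_ne_rev hcut hin.le hrev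
      exact .inr ⟨hrev, not_exists_123_prefix_of_avoids_1234 hcut hin H,
        three_le_of_ascent_prefix hcut hmin hab hbi hπ, by omega,
        suffix_eq_rev_of_ascent_prefix hcut H hab hbi hπ⟩
  · rintro (⟨hrev, hno⟩ | ⟨-, hno, -, -, hrev⟩)
    exacts [avoids_1234_of_prefix_eq_rev hrev hno, avoids_1234_of_suffix_eq_rev hrev hno]
end

section
/- Let π be a decomposable permutation of {1,...,n} with first component π^(1) = π(1)⋯π(i), i = i_π < n. Then π avoids the vincular pattern 1-23 (no indices a < b with b+1 ≤ n satisfying π(a) < π(b) < π(b+1)) if and only if π(i) = 1, the prefix π(1)⋯π(i−1) (a permutation of {2,...,i}) avoids the vincular pattern 1-23, and π(i+1)⋯π(n) is the decreasing sequence n(n−1)⋯(i+1). -/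
/-!
The value `1` of `π` lies in the first component, so it stands to the left of every entry from
position `i` on (and of `π(i)` itself unless `π(i) = 1`). Together with any such entry `π(b)`
it forms a `1-23` as soon as `π(b) < π(b+1)`. Avoidance therefore forces `π(i) = 1` (since
`π(i) ≤ i < π(i+1)`) and a strictly decreasing tail, which, being a permutation of
`{i+1, …, n}`, must be `n(n-1)⋯(i+1)`. Conversely, under these conditions the adjacent pair
`π(b) < π(b+1)` of an occurrence can neither meet the tail nor the entry `π(i) = 1`, so it lies
in the prefix `π(1)⋯π(i-1)`.

Positions and values are 0-based in the code, so `π(i) = 1` reads `π ⟨i - 1, _⟩ = 0`.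
-/

def AvoidsVincular123 {n : ℕ} (π : Equiv.Perm (Fin n)) : Prop :=
  ¬ ∃ a b c : Fin n, a < b ∧ c.val = b.val + 1 ∧ π a < π b ∧ π b < π c

section StrictlyDecreasingTail

variable {n i : ℕ} {g : Fin n → Fin n}

theorem apply_add_le_of_succ_lt
    (hg : ∀ b c : Fin n, i ≤ b.val → c.val = b.val + 1 → g c < g b) (d : ℕ) :
    ∀ a b : Fin n, i ≤ a.val → b.val = a.val + d → (g b).val + d ≤ g a := by
  induction d with
  | zero =>
    intro a b _ hb
    rw [Fin.ext hb, Nat.add_zero]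
  | succ d ih =>
    intro a b ha hb
    have hprev := ih a ⟨a.val + d, by omega⟩ ha rfl
    have hstep := Fin.lt_def.1 (hg ⟨a.val + d, by omega⟩ b (by simp; omega) (by simp; omega))
    omega

theorem val_apply_eq_of_succ_lt
    (hg : ∀ b c : Fin n, i ≤ b.val → c.val = b.val + 1 → g c < g b)
    (hmaps : ∀ a : Fin n, i ≤ a.val → i ≤ (g a).val) (a : Fin n) (ha : i ≤ a.val) :
    (g a).val = n - 1 - (a.val - i) := by
  have hfirst := apply_add_le_of_succ_lt hg (a.val - i) ⟨i, by omega⟩ a le_rfl (by simp; omega)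
  have hlast :=
    apply_add_le_of_succ_lt hg (n - 1 - a.val) a ⟨n - 1, by omega⟩ ha (by simp; omega)
  have hbound := (g ⟨i, by omega⟩).isLt
  have hlow := hmaps ⟨n - 1, by omega⟩ (by simp; omega)
  omega

end StrictlyDecreasingTail

section Decomposable

variable {n i : ℕ} {π : Equiv.Perm (Fin n)}

theorem le_val_apply_of_le (hcut : ∀ a : Fin n, a.val < i ↔ (π a).val < i) (a : Fin n)
    (ha : i ≤ a.val) : i ≤ (π a).val :=
  not_lt.1 fun h => (not_lt.2 ha) ((hcut a).2 h)

theorem exists_val_lt_apply_eq_zero (hi0 : 0 < i) (hin : i < n)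
    (hcut : ∀ a : Fin n, a.val < i ↔ (π a).val < i) :
    ∃ p : Fin n, p.val < i ∧ (π p).val = 0 := by
  obtain ⟨p, hp⟩ := π.surjective ⟨0, by omega⟩
  exact ⟨p, (hcut p).2 (by simp [hp, hi0]), by simp [hp]⟩

theorem val_apply_pred_eq_zero_of_avoids (hi0 : 0 < i) (hin : i < n)
    (hcut : ∀ a : Fin n, a.val < i ↔ (π a).val < i) (havoid : AvoidsVincular123 π) :
    (π ⟨i - 1, Nat.sub_lt_of_lt hin⟩).val = 0 := by
  obtain ⟨p, hp, hp0⟩ := exists_val_lt_apply_eq_zero hi0 hin hcut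
  set b : Fin n := ⟨i - 1, Nat.sub_lt_of_lt hin⟩
  by_contra hne
  have hpb : p ≠ b := fun h => hne (h ▸ hp0)
  have hb := (hcut b).1 (by simp [b]; omega)
  have hc := le_val_apply_of_le hcut ⟨i, hin⟩ le_rfl
  exact havoid ⟨p, b, ⟨i, hin⟩, Fin.lt_def.2 (by simp [b, Fin.ext_iff] at hpb ⊢; omega),
    by simp [b]; omega, Fin.lt_def.2 (by omega), Fin.lt_def.2 (by omega)⟩

theorem apply_succ_lt_of_avoids (hi0 : 0 < i) (hin : i < n)
    (hcut : ∀ a : Fin n, a.val < i ↔ (π a).val < i) (havoid : AvoidsVincular123 π)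
    (b c : Fin n) (hb : i ≤ b.val) (hc : c.val = b.val + 1) : π c < π b := by
  obtain ⟨p, hp, hp0⟩ := exists_val_lt_apply_eq_zero hi0 hin hcut
  have hpb := le_val_apply_of_le hcut b hb
  refine lt_of_le_of_ne (not_lt.1 fun hbc => havoid ⟨p, b, c, Fin.lt_def.2 (by omega), hc,
    Fin.lt_def.2 (by omega), hbc⟩) fun h => ?_
  have := congrArg Fin.val (π.injective h)
  omega

theorem avoids_of_apply_pred_eq_zero (hin : i < n)
    (hzero : (π ⟨i - 1, Nat.sub_lt_of_lt hin⟩).val = 0)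
    (hprefix : ¬ ∃ a b c : Fin n, a < b ∧ c.val = b.val + 1 ∧ c.val < i - 1 ∧
      π a < π b ∧ π b < π c)
    (htail : ∀ a : Fin n, i ≤ a.val → (π a).val = n - 1 - (a.val - i)) :
    AvoidsVincular123 π := by
  rintro ⟨a, b, c, hab, hc, hab', hbc⟩
  rw [Fin.lt_def] at hab' hbc
  rcases Nat.lt_or_ge c.val (i - 1) with hci | hci
  · exact hprefix ⟨a, b, c, hab, hc, hci, Fin.lt_def.2 hab', Fin.lt_def.2 hbc⟩
  rcases Nat.lt_or_ge b.val i with hbi | hbi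
  · -- the pair `b, c` is `i-2, i-1` or `i-1, i`, and so contains the minimum `π(i-1) = 0`
    rcases Nat.lt_or_ge c.val i with hci' | hci'
    · rw [show c = ⟨i - 1, Nat.sub_lt_of_lt hin⟩ from Fin.ext (by simp; omega)] at hbc
      omega
    · rw [show b = ⟨i - 1, Nat.sub_lt_of_lt hin⟩ from Fin.ext (by simp; omega)] at hab'
      omega
  · have := htail b hbi
    have := htail c (by omega)
    omega

end Decomposable

/-- A decomposable permutation with first component of length i avoids
the vincular pattern 1-23 iff π(i) = 1, the prefix π(1)⋯π(i-1) avoids 1-23, and the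
suffix is the decreasing sequence n(n-1)⋯(i+1).  (0-indexed: π(i-1) has value 0.) -/
theorem stmt13 (n i : ℕ) (π : Equiv.Perm (Fin n))
    (hi0 : 0 < i) (hin : i < n)
    (hcut : ∀ a : Fin n, a.val < i ↔ (π a).val < i) :
    (¬ ∃ a b c : Fin n, a < b ∧ c.val = b.val + 1 ∧ π a < π b ∧ π b < π c) ↔
    ((π ⟨i - 1, by omega⟩).val = 0 ∧
      (¬ ∃ a b c : Fin n, a < b ∧ c.val = b.val + 1 ∧ c.val < i - 1 ∧
        π a < π b ∧ π b < π c) ∧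
      ∀ a : Fin n, i ≤ a.val → (π a).val = n - 1 - (a.val - i)) := by
  refine ⟨fun havoid => ⟨?_, ?_, ?_⟩, fun ⟨hzero, hprefix, htail⟩ => ?_⟩
  · exact val_apply_pred_eq_zero_of_avoids hi0 hin hcut havoid
  · rintro ⟨a, b, c, hab, hc, -, h⟩
    exact havoid ⟨a, b, c, hab, hc, h⟩
  · exact val_apply_eq_of_succ_lt (apply_succ_lt_of_avoids hi0 hin hcut havoid)
      (le_val_apply_of_le hcut)
  · exact avoids_of_apply_pred_eq_zero hin hzero hprefix htail
end

section
/- Let σ be an indecomposable pattern and let π be a permutation of {1,...,n} that decomposes as a concatenation of components π^(1)⋯π^(k) (each component, after reduction, being an indecomposable permutation). Then π avoids σ if and only if every component π^(j) (reduced to a permutation of an initial segment) avoids σ. Consequently, for σ indecomposable, a permutation avoids σ if and only if each of its components avoids σ. -/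
/-!
Proof idea: if an occurrence `f` of `σ` in `π` had positions on both sides of a cut point `c`
of `π` (a `c` with `π {0, …, c-1} = {0, …, c-1}`), then the number `i` of pattern positions
sent below `c` would be a proper cut point of `σ`: positions below `c` are exactly the first `i`
ones by monotonicity, their images under `π` are exactly the values below `c`, and since `σ` and
`π ∘ f` have the same relative order these are the `i` smallest values of `σ`. So an occurrence
of an indecomposable pattern lies between two consecutive cut points, i.e. inside one component.
-/

open Finset

variable {n k : ℕ}

def IsCutPoint (π : Equiv.Perm (Fin n)) (c : ℕ) : Prop :=
  ∀ a : Fin n, a.val < c ↔ (π a).val < c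

lemma Monotone.lt_iff_val_lt_card {α : Type*} [LinearOrder α] {f : Fin k → α} (hf : Monotone f)
    (c : α) (j : Fin k) : f j < c ↔ j.val < #{x | f x < c} := by
  constructor
  · intro hj
    have hsub : Iic j ⊆ ({x | f x < c} : Finset (Fin k)) := fun x hx =>
      mem_filter.2 ⟨mem_univ x, (hf (mem_Iic.1 hx)).trans_lt hj⟩
    simpa using card_le_card hsub
  · intro hj
    by_contra hfj
    have hsub : ({x | f x < c} : Finset (Fin k)) ⊆ Iio j := fun x hx =>
      mem_Iio.2 <| lt_of_not_ge fun hjx => hfj <| (hf hjx).trans_lt (mem_filter.1 hx).2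
    have := card_le_card hsub
    simp only [Fin.card_Iio] at this
    omega

lemma lt_iff_val_perm_lt_card {α : Type*} [LinearOrder α] (σ : Equiv.Perm (Fin k))
    {g : Fin k → α} (hg : ∀ a b, σ a < σ b ↔ g a < g b) (c : α) (a : Fin k) :
    g a < c ↔ (σ a).val < #{x | g x < c} := by
  have hmono : Monotone (g ∘ σ.symm) :=
    StrictMono.monotone fun v w hvw => (hg _ _).1 (by simpa using hvw)
  have hcard : #{v | g (σ.symm v) < c} = #{x | g x < c} :=
    card_equiv σ.symm (by simp)
  have := hmono.lt_iff_val_lt_card c (σ a)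
  simp only [Function.comp_apply, Equiv.symm_apply_apply] at this
  rwa [hcard] at this

lemma IsCutPoint.card_isCutPoint {σ : Equiv.Perm (Fin k)} {π : Equiv.Perm (Fin n)}
    {f : Fin k → Fin n} (hf : Monotone f) (hiso : ∀ a b, σ a < σ b ↔ π (f a) < π (f b))
    {c : ℕ} (hc : IsCutPoint π c) : IsCutPoint σ #{x | (f x).val < c} := by
  have hcard : #{x | (f x).val < c} = #{x | (π (f x)).val < c} :=
    congrArg card (filter_congr fun x _ => hc (f x))
  have hmono : Monotone fun x => (f x).val := fun _ _ h => hf h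
  intro a
  rw [← hmono.lt_iff_val_lt_card c a, hc, hcard]
  exact lt_iff_val_perm_lt_card σ (g := fun x => (π (f x)).val) (by simpa using hiso) c a

lemma IsCutPoint.le_or_lt_of_indecomposable {σ : Equiv.Perm (Fin k)}
    (hσ : ¬ ∃ i : ℕ, 0 < i ∧ i < k ∧ IsCutPoint σ i) {π : Equiv.Perm (Fin n)}
    {f : Fin k → Fin n} (hf : Monotone f) (hiso : ∀ a b, σ a < σ b ↔ π (f a) < π (f b))
    {c : ℕ} (hc : IsCutPoint π c) : (∀ j, c ≤ (f j).val) ∨ ∀ j, (f j).val < c := by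
  have hcut := hc.card_isCutPoint hf hiso
  have hmono : Monotone fun x => (f x).val := fun _ _ h => hf h
  have hle : #{x | (f x).val < c} ≤ k := by
    simpa using card_filter_le (univ : Finset (Fin k)) fun x => (f x).val < c
  rcases Nat.eq_zero_or_pos #{x | (f x).val < c} with h0 | hpos
  · left
    intro j
    simpa [h0] using hmono.lt_iff_val_lt_card c j
  · right
    have hk : #{x | (f x).val < c} = k := by
      by_contra hne
      exact hσ ⟨_, hpos, lt_of_le_of_ne hle hne, hcut⟩
    intro j
    simpa [hk] using (hmono.lt_iff_val_lt_card c j).2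

lemma exists_component (π : Equiv.Perm (Fin n)) {m : ℕ} (hm : m < n) :
    ∃ s t, s ≤ m ∧ m < t ∧ t ≤ n ∧ IsCutPoint π s ∧ IsCutPoint π t ∧
      ∀ c, s < c → c < t → ¬ IsCutPoint π c := by
  classical
  have hcut0 : IsCutPoint π 0 := by simp [IsCutPoint]
  have hcutn : IsCutPoint π n := by simp [IsCutPoint]
  have hex : ∃ t, m < t ∧ t ≤ n ∧ IsCutPoint π t := ⟨n, hm, le_rfl, hcutn⟩
  obtain ⟨hmt, htn, ht⟩ := Nat.find_spec hex
  refine ⟨Nat.findGreatest (IsCutPoint π) m, Nat.find hex, Nat.findGreatest_le m, hmt, htn,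
    Nat.findGreatest_spec (Nat.zero_le m) hcut0, ht, fun c hsc hct hc => ?_⟩
  rcases le_or_gt c m with hcm | hmc
  · exact Nat.findGreatest_is_greatest hsc hcm hc
  · exact Nat.find_min hex hct ⟨hmc, hct.le.trans htn, hc⟩

/-- For an indecomposable pattern σ, a permutation π avoids σ iff every
component of π avoids σ (an occurrence of σ cannot span two components).  Components
are the blocks between consecutive cut points with no cut point strictly inside. -/
theorem stmt17 (n k : ℕ) (hk : 0 < k) (σ : Equiv.Perm (Fin k))
    (hσ : ¬ ∃ i : ℕ, 0 < i ∧ i < k ∧ ∀ a : Fin k, a.val < i ↔ (σ a).val < i)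
    (π : Equiv.Perm (Fin n)) :
    (¬ ∃ f : Fin k → Fin n, StrictMono f ∧
        ∀ a b : Fin k, σ a < σ b ↔ π (f a) < π (f b)) ↔
    (∀ s t : ℕ, s < t → t ≤ n →
      (∀ a : Fin n, a.val < s ↔ (π a).val < s) →
      (∀ a : Fin n, a.val < t ↔ (π a).val < t) →
      (∀ c : ℕ, s < c → c < t → ¬ ∀ a : Fin n, a.val < c ↔ (π a).val < c) →
      ¬ ∃ f : Fin k → Fin n, StrictMono f ∧
        (∀ j, s ≤ (f j).val ∧ (f j).val < t) ∧
        ∀ a b : Fin k, σ a < σ b ↔ π (f a) < π (f b)) := by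
  refine ⟨fun havoid _ _ _ _ _ _ _ ⟨f, hf, _, hiso⟩ => havoid ⟨f, hf, hiso⟩, ?_⟩
  rintro havoid ⟨f, hf, hiso⟩
  let j₀ : Fin k := ⟨0, hk⟩
  obtain ⟨s, t, hs₀, ht₀, htn, hs, ht, hnocut⟩ := exists_component π (f j₀).isLt
  have hrange (j : Fin k) : s ≤ (f j).val ∧ (f j).val < t := by
    constructor
    · rcases hs.le_or_lt_of_indecomposable hσ hf.monotone hiso with h | h
      · exact h j
      · exact absurd (h j₀) (not_lt.2 hs₀)
    · rcases ht.le_or_lt_of_indecomposable hσ hf.monotone hiso with h | h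
      · exact absurd (h j₀) (not_le.2 ht₀)
      · exact h j
  exact havoid s t (hs₀.trans_lt ht₀) htn hs ht hnocut ⟨f, hf, hrange, hiso⟩
end
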